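/- arXiv:2506.05733 — 7 statements merged into one kernel-verified Lean document; each statement's English description precedes it below -/
import Mathlib

section
/- Let L be a Lie algebra over a field k and let S be a subset of L. Then the Lie subalgebra of L generated by S coincides, as a k-linear subspace of L, with the k-linear span of the right-nested commutators of elements of S. In particular, every nested commutator of elements of S (with brackets applied in any order) is a k-linear combination of right-nested commutators of elements of S. -/
/-- `IsRightNested S x` means `x` is a right-nested commutator of elements of `S`,
i.e. `x = ⁅a₁, ⁅a₂, …, ⁅a_{m-1}, a_m⁆…⁆⁆` for some `m ≥ 1` and `a₁, …, a_m ∈ S`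
(equal to `a₁` itself when `m = 1`). -/
inductive IsRightNested {L : Type*} [LieRing L] (S : Set L) : L → Prop
  | base {a : L} : a ∈ S → IsRightNested S a
  | step {a x : L} : a ∈ S → IsRightNested S x → IsRightNested S ⁅a, x⁆

/-- `IsNested S x` means `x` is a nested commutator of elements of `S`, with the
brackets applied in any order. -/
inductive IsNested {L : Type*} [LieRing L] (S : Set L) : L → Prop
  | base {a : L} : a ∈ S → IsNested S a
  | step {x y : L} : IsNested S x → IsNested S y → IsNested S ⁅x, y⁆

section
variable {k L : Type*} [Field k] [LieRing L] [LieAlgebra k L] (S : Set L)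

lemma mem_span_bracket {a : L} (ha : a ∈ S) :
    ∀ y ∈ Submodule.span k {x | IsRightNested S x},
      ⁅a, y⁆ ∈ Submodule.span k {x | IsRightNested S x} := by
  intro y hy
  induction hy using Submodule.span_induction with
  | mem x hx => exact Submodule.subset_span (IsRightNested.step ha hx)
  | zero => simp
  | add x y _ _ hx hy => rw [lie_add]; exact Submodule.add_mem _ hx hy
  | smul c x _ hx => rw [lie_smul]; exact Submodule.smul_mem _ c hx

lemma rn_bracket_mem {x : L} (hx : IsRightNested S x) :
    ∀ y ∈ Submodule.span k {x | IsRightNested S x},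
      ⁅x, y⁆ ∈ Submodule.span k {x | IsRightNested S x} := by
  induction hx with
  | base ha => exact mem_span_bracket S ha
  | @step a x ha hx ih =>
      intro y hy
      have : ⁅⁅a, x⁆, y⁆ = ⁅a, ⁅x, y⁆⁆ - ⁅x, ⁅a, y⁆⁆ := by
        rw [lie_lie]
      rw [this]
      exact Submodule.sub_mem _
        (mem_span_bracket S ha _ (ih y hy))
        (ih _ (mem_span_bracket S ha y hy))

lemma span_bracket_mem {x y : L}
    (hx : x ∈ Submodule.span k {x | IsRightNested S x})
    (hy : y ∈ Submodule.span k {x | IsRightNested S x}) :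
    ⁅x, y⁆ ∈ Submodule.span k {x | IsRightNested S x} := by
  induction hx using Submodule.span_induction with
  | mem z hz => exact rn_bracket_mem S hz y hy
  | zero => simp
  | add u v _ _ hu hv => rw [add_lie]; exact Submodule.add_mem _ hu hv
  | smul c u _ hu => rw [smul_lie]; exact Submodule.smul_mem _ c hu

end

/-- The Lie subalgebra generated by `S` coincides, as a `k`-linear subspace, with the
`k`-linear span of the right-nested commutators of elements of `S`; in particular every
nested commutator of elements of `S` is a `k`-linear combination of right-nested ones. -/
theorem stmt0 {k L : Type*} [Field k] [LieRing L] [LieAlgebra k L] (S : Set L) :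
    (LieSubalgebra.lieSpan k L S).toSubmodule =
      Submodule.span k {x | IsRightNested S x} ∧
    ∀ x : L, IsNested S x → x ∈ Submodule.span k {x | IsRightNested S x} := by
  set M := Submodule.span k {x | IsRightNested S x} with hM
  have hcl : ∀ {x y : L}, x ∈ M → y ∈ M → ⁅x, y⁆ ∈ M := fun hx hy =>
    span_bracket_mem S hx hy
  constructor
  · apply le_antisymm
    · have : LieSubalgebra.lieSpan k L S ≤
          ({ toSubmodule := M, lie_mem' := fun hx hy => hcl hx hy } : LieSubalgebra k L) := by
        apply LieSubalgebra.lieSpan_le.mpr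
        intro a ha
        exact Submodule.subset_span (IsRightNested.base ha)
      exact this
    · apply Submodule.span_le.mpr
      intro x hx
      induction hx with
      | base ha => exact LieSubalgebra.subset_lieSpan ha
      | step ha _ ih =>
          exact (LieSubalgebra.lieSpan k L S).lie_mem (LieSubalgebra.subset_lieSpan ha) ih
  · intro x hx
    induction hx with
    | base ha => exact Submodule.subset_span (IsRightNested.base ha)
    | step _ _ ihx ihy => exact hcl ihx ihy
end

section
/- Let L be a Lie algebra over a field k, let S be a subset of L, and let g be the Lie subalgebra of L generated by S. Then the commutator subalgebra [g,g], i.e. the k-linear span of {[U,V] : U, V ∈ g}, equals the k-linear span of the right-nested commutators of elements of S of length m ≥ 2. Consequently, if g is finite-dimensional, then [g,g] has a basis consisting of right-nested commutators of elements of S of length at least 2. -/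
/-- `IsRightNestedOfLen S m x` means `x` is a right-nested commutator of elements of `S`
of length `m`, i.e. `x = ⁅a₁, ⁅a₂, …, ⁅a_{m-1}, a_m⁆…⁆⁆` with `a₁, …, a_m ∈ S`. -/
inductive IsRightNestedOfLen {L : Type*} [LieRing L] (S : Set L) : ℕ → L → Prop
  | base {a : L} : a ∈ S → IsRightNestedOfLen S 1 a
  | step {a x : L} {m : ℕ} : a ∈ S → IsRightNestedOfLen S m x →
      IsRightNestedOfLen S (m + 1) ⁅a, x⁆

section Aux

variable {k L : Type*} [Field k] [LieRing L] [LieAlgebra k L] (S : Set L)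

variable {S}

/-- Span of nested commutators of length ≥ 2. -/
private abbrev N2 (k : Type*) {L : Type*} [Field k] [LieRing L] [LieAlgebra k L] (S : Set L) :
    Submodule k L := Submodule.span k {x | ∃ m, 2 ≤ m ∧ IsRightNestedOfLen S m x}

/-- Span of nested commutators of any length. -/
private abbrev N1 (k : Type*) {L : Type*} [Field k] [LieRing L] [LieAlgebra k L] (S : Set L) :
    Submodule k L := Submodule.span k {x | ∃ m, IsRightNestedOfLen S m x}

lemma nested_pos {m : ℕ} {x : L} (h : IsRightNestedOfLen S m x) : 1 ≤ m := by
  cases h <;> omega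

lemma lie_mem_N2 {a : L} (ha : a ∈ S) {z : L} (hz : z ∈ N2 k S) : ⁅a, z⁆ ∈ N2 k S := by
  induction hz using Submodule.span_induction with
  | mem y hy =>
    obtain ⟨m, hm, hy⟩ := hy
    exact Submodule.subset_span ⟨m + 1, by omega, hy.step ha⟩
  | zero => simp
  | add y z _ _ hy hz => rw [lie_add]; exact add_mem hy hz
  | smul c y _ hy => rw [lie_smul]; exact Submodule.smul_mem _ _ hy

lemma key_lemma {m : ℕ} {x : L} (hx : IsRightNestedOfLen S m x) :
    ∀ {n : ℕ} {y : L}, IsRightNestedOfLen S n y → ⁅x, y⁆ ∈ N2 k S := by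
  induction hx with
  | base ha =>
    intro n y hy
    exact Submodule.subset_span ⟨n + 1, by have := nested_pos hy; omega, hy.step ha⟩
  | @step a x' m' ha hx' ih =>
    intro n y hy
    rw [lie_lie]
    exact sub_mem (lie_mem_N2 ha (ih hy)) (ih (hy.step ha))

lemma lie_mem_N2' {x y : L} (hx : x ∈ N1 k S) (hy : y ∈ N1 k S) : ⁅x, y⁆ ∈ N2 k S := by
  induction hx using Submodule.span_induction with
  | mem u hu =>
    obtain ⟨m, hu⟩ := hu
    induction hy using Submodule.span_induction with
    | mem v hv => obtain ⟨n, hv⟩ := hv; exact key_lemma hu hv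
    | zero => simp
    | add v w _ _ hv hw => rw [lie_add]; exact add_mem hv hw
    | smul c v _ hv => rw [lie_smul]; exact Submodule.smul_mem _ _ hv
  | zero => simp
  | add u w _ _ hu hw => rw [add_lie]; exact add_mem hu hw
  | smul c u _ hu => rw [smul_lie]; exact Submodule.smul_mem _ _ hu

lemma N2_le_N1 : N2 k S ≤ N1 k S :=
  Submodule.span_mono fun _ ⟨m, _, h⟩ => ⟨m, h⟩

/-- `N1` as a Lie subalgebra. -/
private def gAlg : LieSubalgebra k L :=
  { N1 k S with
    lie_mem' := fun hx hy => N2_le_N1 (lie_mem_N2' hx hy) }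

lemma lieSpan_toSubmodule : (LieSubalgebra.lieSpan k L S).toSubmodule = N1 k S := by
  apply le_antisymm
  · have h1 : LieSubalgebra.lieSpan k L S ≤ gAlg (S := S) :=
      (LieSubalgebra.lieSpan_le).2 fun a ha =>
        Submodule.subset_span ⟨1, IsRightNestedOfLen.base ha⟩
    exact h1
  · rw [Submodule.span_le]
    rintro x ⟨m, hx⟩
    induction hx with
    | base ha => exact LieSubalgebra.subset_lieSpan ha
    | step ha _ ih =>
      exact (LieSubalgebra.lieSpan k L S).lie_mem (LieSubalgebra.subset_lieSpan ha) ih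

lemma mem_lieSpan_iff {x : L} :
    x ∈ LieSubalgebra.lieSpan k L S ↔ x ∈ N1 k S := by
  rw [← lieSpan_toSubmodule]; rfl

end Aux

/-- The commutator subalgebra `[g,g]` of the Lie subalgebra `g` generated by `S` equals
the `k`-linear span of the right-nested commutators of elements of `S` of length `m ≥ 2`;
consequently, if `g` is finite dimensional then `[g,g]` has a basis consisting of
right-nested commutators of elements of `S` of length at least `2`. -/
theorem stmt1 {k L : Type*} [Field k] [LieRing L] [LieAlgebra k L] (S : Set L) :
    Submodule.span k {x | ∃ u ∈ LieSubalgebra.lieSpan k L S,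
        ∃ v ∈ LieSubalgebra.lieSpan k L S, x = ⁅u, v⁆} =
      Submodule.span k {x | ∃ m, 2 ≤ m ∧ IsRightNestedOfLen S m x} ∧
    (FiniteDimensional k ↥(LieSubalgebra.lieSpan k L S) →
      ∃ (D : ℕ) (V : Fin D → L),
        (∀ i, ∃ m, 2 ≤ m ∧ IsRightNestedOfLen S m (V i)) ∧
        LinearIndependent k V ∧
        Submodule.span k (Set.range V) =
          Submodule.span k {x | ∃ u ∈ LieSubalgebra.lieSpan k L S,
            ∃ v ∈ LieSubalgebra.lieSpan k L S, x = ⁅u, v⁆}) := by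
  have hmain : Submodule.span k {x | ∃ u ∈ LieSubalgebra.lieSpan k L S,
        ∃ v ∈ LieSubalgebra.lieSpan k L S, x = ⁅u, v⁆} = N2 k S := by
    apply le_antisymm
    · rw [Submodule.span_le]
      rintro x ⟨u, hu, v, hv, rfl⟩
      exact lie_mem_N2' (mem_lieSpan_iff.1 hu) (mem_lieSpan_iff.1 hv)
    · apply Submodule.span_mono
      rintro x ⟨m, hm, hx⟩
      cases hx with
      | base _ => omega
      | @step a x' m' ha hx' =>
        exact ⟨a, LieSubalgebra.subset_lieSpan ha, x',
          mem_lieSpan_iff.2 (Submodule.subset_span ⟨m', hx'⟩), rfl⟩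
  refine ⟨hmain, fun hFD => ?_⟩
  have hFD1 : FiniteDimensional k (N1 k S) := by
    rw [← lieSpan_toSubmodule]; exact hFD
  have hFD2 : FiniteDimensional k (N2 k S) :=
    Submodule.finiteDimensional_of_le (N2_le_N1)
  obtain ⟨b, hbT, hbspan, hbli⟩ :=
    exists_linearIndependent k {x | ∃ m, 2 ≤ m ∧ IsRightNestedOfLen S m x}
  have hbN2 : ∀ x ∈ b, x ∈ N2 k S := fun x hx => Submodule.subset_span (hbT hx)
  -- lift b into N2
  let f : b → (N2 k S) := fun x => ⟨(x : L), hbN2 x x.2⟩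
  have hfli : LinearIndependent k f := by
    apply LinearIndependent.of_comp (N2 k S).subtype
    exact hbli
  have : Finite b := hfli.finite
  have : Fintype b := Fintype.ofFinite b
  let e := (Fintype.equivFin b).symm
  refine ⟨Fintype.card b, fun i => (e i : L), ?_, ?_, ?_⟩
  · intro i; exact hbT (e i).2
  · exact hbli.comp e e.injective
  · have hrange : Set.range (fun i => ((e i : b) : L)) = b := by
      rw [show (fun i => ((e i : b) : L)) = Subtype.val ∘ e from rfl,
        Set.range_comp, Equiv.range_eq_univ, Set.image_univ, Subtype.range_coe]
    rw [hrange, hbspan, hmain]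
end

section
/- Let 𝒜 = {A₁, …, A_L} be a dynamical generating set of N×N matrices, let χ be a Hermitian M×M complex matrix with exactly K distinct eigenvalues, and let 𝒜_[L] = {A_i ⊗ I_M : i ∈ [L]} ∪ {A_i ⊗ χ : i ∈ [L]}. Then the center of the DLA generated by 𝒜_[L] satisfies Z(g_{𝒜_[L]}) = span_ℝ{C ⊗ I_M : C ∈ Z(g_𝒜)} + span_ℝ{C ⊗ χ : C ∈ Z(g_𝒜)}. -/
open Matrix Kronecker

attribute [local instance 100] LieRing.ofAssociativeRing

/-- A *dynamical generating set*: a family of at least two ℝ-linearly independent,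
traceless, anti-Hermitian complex matrices of a common size. -/
def IsDynGenSet {l N : ℕ} (A : Fin l → Matrix (Fin N) (Fin N) ℂ) : Prop :=
  2 ≤ l ∧ LinearIndependent ℝ A ∧ (∀ i, Matrix.trace (A i) = 0) ∧ (∀ i, (A i)ᴴ = -(A i))

/-- The dynamical Lie algebra generated by a set of matrices: the smallest real Lie
subalgebra of the matrix Lie algebra (bracket `[A,B] = AB - BA`) containing the set. -/
noncomputable def DLA {n : Type*} [Fintype n] [DecidableEq n] (S : Set (Matrix n n ℂ)) :
    LieSubalgebra ℝ (Matrix n n ℂ) :=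
  LieSubalgebra.lieSpan ℝ (Matrix n n ℂ) S

/-- The commutator subalgebra `[g,g]`, as the ℝ-linear span of brackets of elements of `g`. -/
noncomputable def commSub {n : Type*} [Fintype n] [DecidableEq n]
    (g : LieSubalgebra ℝ (Matrix n n ℂ)) : Submodule ℝ (Matrix n n ℂ) :=
  Submodule.span ℝ {x | ∃ u ∈ g, ∃ v ∈ g, x = ⁅u, v⁆}

/-- The center `Z(g) = {u ∈ g : [u,v] = 0 for all v ∈ g}`, as an ℝ-submodule. -/
noncomputable def centerSubmodule {n : Type*} [Fintype n] [DecidableEq n]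
    (g : LieSubalgebra ℝ (Matrix n n ℂ)) : Submodule ℝ (Matrix n n ℂ) where
  carrier := {u | u ∈ g ∧ ∀ v ∈ g, ⁅u, v⁆ = 0}
  add_mem' := by
    rintro a b ⟨ha, ha'⟩ ⟨hb, hb'⟩
    exact ⟨g.add_mem ha hb, fun v hv => by rw [add_lie, ha' v hv, hb' v hv, add_zero]⟩
  zero_mem' := ⟨g.zero_mem, fun v _ => zero_lie v⟩
  smul_mem' := by
    rintro c a ⟨ha, ha'⟩
    exact ⟨g.smul_mem c ha, fun v hv => by rw [smul_lie, ha' v hv, smul_zero]⟩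

/-!
Write `g` for the DLA generated by the `A i ⊗ 1` and `A i ⊗ χ`, and `Z` for `Z(g_𝒜)`.
Every element of `g` is a real combination of `X ⊗ χ ^ k` with `X ∈ g_𝒜`, and brackets in `g`
are combinations of `⁅u, v⁆ ⊗ χ ^ k`. On skew-Hermitian matrices the trace form `tr (xᴴ y)` is
definite and makes `Z` orthogonal to `⁅g_𝒜, g_𝒜⁆`, also after complexification, so a ℂ-linear
projection `π` onto `span_ℂ Z` kills all brackets of `g_𝒜`. Applied blockwise, `π` kills
`⁅g, g⁆` and so maps `g` into the complex span of the `π (A i) ⊗ 1` and `π (A i) ⊗ χ`, hence into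
the complex span of the `C ⊗ 1` and `C ⊗ χ` with `C ∈ Z`. The blocks of a central `U` commute with
`g_𝒜` (because `U` commutes with every `X ⊗ 1`), so they lie in `span_ℂ Z` and `π` fixes `U`.
Since all matrices involved are skew-Hermitian, the complex span can be replaced by the real one.
-/

open Submodule Complex
open scoped ComplexOrder

namespace Matrix

variable {n m R : Type*}

theorem neg_kronecker [Mul R] [HasDistribNeg R] (X : Matrix n n R) (Y : Matrix m m R) :
    (-X) ⊗ₖ Y = -(X ⊗ₖ Y) := by
  ext; simp [neg_mul]

theorem kronecker_lie_kronecker [Fintype n] [Fintype m] [CommRing R] (X Y : Matrix n n R)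
    {p q : Matrix m m R} (h : Commute p q) : ⁅X ⊗ₖ p, Y ⊗ₖ q⁆ = ⁅X, Y⁆ ⊗ₖ (p * q) := by
  rw [Ring.lie_def, Ring.lie_def, ← mul_kronecker_mul, ← mul_kronecker_mul, h.eq]
  ext
  simp [sub_mul]

section Blocks

variable [CommSemiring R]

def kronBlock (p q : m) : Matrix (n × m) (n × m) R →ₗ[R] Matrix n n R where
  toFun V := V.submatrix (·, p) (·, q)
  map_add' _ _ := rfl
  map_smul' _ _ := rfl

@[simp]
theorem kronBlock_apply (p q : m) (V : Matrix (n × m) (n × m) R) (a b : n) :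
    kronBlock p q V a b = V (a, p) (b, q) := rfl

theorem kronBlock_kronecker (p q : m) (X : Matrix n n R) (Y : Matrix m m R) :
    kronBlock p q (X ⊗ₖ Y) = Y p q • X := by
  ext; simp [mul_comm]

theorem kronBlock_lie_kronecker_one [Fintype n] [Fintype m] [DecidableEq m] {R : Type*}
    [CommRing R] (p q : m) (V : Matrix (n × m) (n × m) R) (X : Matrix n n R) :
    kronBlock p q ⁅V, X ⊗ₖ (1 : Matrix m m R)⁆ = ⁅kronBlock p q V, X⁆ := by
  ext a b
  simp [Ring.lie_def, mul_apply, Fintype.sum_prod_type, one_apply]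

def blockwiseMap (f : Matrix n n R →ₗ[R] Matrix n n R) :
    Matrix (n × m) (n × m) R →ₗ[R] Matrix (n × m) (n × m) R where
  toFun V := of fun x y => f (kronBlock x.2 y.2 V) x.1 y.1
  map_add' _ _ := by ext; simp
  map_smul' _ _ := by ext; simp

theorem blockwiseMap_kronecker (f : Matrix n n R →ₗ[R] Matrix n n R) (X : Matrix n n R)
    (Y : Matrix m m R) : blockwiseMap f (X ⊗ₖ Y) = f X ⊗ₖ Y := by
  ext ⟨a, p⟩ ⟨b, q⟩
  simp [blockwiseMap, kronBlock_kronecker, mul_comm]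

theorem blockwiseMap_eq_self {f : Matrix n n R →ₗ[R] Matrix n n R} {V : Matrix (n × m) (n × m) R}
    (h : ∀ p q, f (kronBlock p q V) = kronBlock p q V) : blockwiseMap f V = V := by
  ext ⟨a, p⟩ ⟨b, q⟩
  simp [blockwiseMap, h]

end Blocks

end Matrix

theorem Submodule.exists_add_I_smul_of_mem_span_complex {V : Type*} [AddCommGroup V]
    [Module ℂ V] [Module ℝ V] [IsScalarTower ℝ ℂ V] (W : Submodule ℝ V) {x : V}
    (hx : x ∈ span ℂ (W : Set V)) : ∃ a ∈ W, ∃ b ∈ W, x = a + I • b := by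
  have re_add_im_smul (c : ℂ) (v : V) : c • v = c.re • v + I • (c.im • v) := by
    conv_lhs => rw [← re_add_im c, add_smul, mul_comm, mul_smul]
    rw [← algebraMap_smul ℂ c.re v, ← algebraMap_smul ℂ c.im v]
    rfl
  induction hx using span_induction with
  | mem y hy => exact ⟨y, hy, 0, W.zero_mem, by simp⟩
  | zero => exact ⟨0, W.zero_mem, 0, W.zero_mem, by simp⟩
  | add y z _ _ hy hz =>
    obtain ⟨a, ha, b, hb, rfl⟩ := hy
    obtain ⟨a', ha', b', hb', rfl⟩ := hz
    exact ⟨a + a', W.add_mem ha ha', b + b', W.add_mem hb hb', by rw [smul_add]; abel⟩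
  | smul c y _ hy =>
    obtain ⟨a, ha, b, hb, rfl⟩ := hy
    refine ⟨c.re • a - c.im • b, W.sub_mem (W.smul_mem _ ha) (W.smul_mem _ hb),
      c.im • a + c.re • b, W.add_mem (W.smul_mem _ ha) (W.smul_mem _ hb), ?_⟩
    rw [smul_add, re_add_im_smul c a, ← mul_smul, re_add_im_smul (c * I) b, mul_I_re, mul_I_im]
    module

section SkewHermitian

variable {n : Type*} [Fintype n] [DecidableEq n]

def skewHermitianLieSubalgebra (n : Type*) [Fintype n] [DecidableEq n] :
    LieSubalgebra ℝ (Matrix n n ℂ) where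
  carrier := {x | xᴴ = -x}
  add_mem' {a b} ha hb := by simp_all [conjTranspose_add, add_comm]
  zero_mem' := by simp
  smul_mem' c a ha := by simp_all [conjTranspose_smul]
  lie_mem' {a b} ha hb := by
    simp_all [Ring.lie_def, conjTranspose_sub, conjTranspose_mul]

theorem mem_skewHermitianLieSubalgebra {x : Matrix n n ℂ} :
    x ∈ skewHermitianLieSubalgebra n ↔ xᴴ = -x := Iff.rfl

theorem eq_zero_of_skewHermitian_add_I_smul {a b : Matrix n n ℂ}
    (ha : a ∈ skewHermitianLieSubalgebra n) (hb : b ∈ skewHermitianLieSubalgebra n)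
    (hab : a + I • b ∈ skewHermitianLieSubalgebra n) : b = 0 := by
  rw [mem_skewHermitianLieSubalgebra] at *
  rw [conjTranspose_add, conjTranspose_smul, ha, hb] at hab
  have : (2 * I) • b = 0 := by
    rw [mul_smul, two_smul]
    simpa [add_eq_zero_iff_eq_neg] using congrArg (· + a + I • b) hab
  simpa using this

theorem mem_of_mem_span_complex_of_le_skewHermitian {W : Submodule ℝ (Matrix n n ℂ)}
    (hW : W ≤ (skewHermitianLieSubalgebra n).toSubmodule) {x : Matrix n n ℂ}
    (hx : x ∈ span ℂ (W : Set (Matrix n n ℂ))) (hxs : x ∈ skewHermitianLieSubalgebra n) :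
    x ∈ W := by
  obtain ⟨a, ha, b, hb, rfl⟩ := W.exists_add_I_smul_of_mem_span_complex hx
  rw [eq_zero_of_skewHermitian_add_I_smul (hW ha) (hW hb) hxs, smul_zero, add_zero]
  exact ha

theorem dla_le_skewHermitianLieSubalgebra {S : Set (Matrix n n ℂ)}
    (hS : ∀ x ∈ S, xᴴ = -x) : DLA S ≤ skewHermitianLieSubalgebra n :=
  LieSubalgebra.lieSpan_le.mpr hS

end SkewHermitian

section Center

variable {n : Type*} [Fintype n] [DecidableEq n]

theorem Matrix.trace_mul_lie_eq_zero {R : Type*} [CommRing R] {z u : Matrix n n R}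
    (hzu : ⁅z, u⁆ = 0) (v : Matrix n n R) : trace (z * ⁅u, v⁆) = 0 := by
  have hcomm : z * u = u * z := sub_eq_zero.mp ((Ring.lie_def z u).symm.trans hzu)
  rw [Ring.lie_def, mul_sub, trace_sub, sub_eq_zero, ← Matrix.mul_assoc, hcomm,
    Matrix.mul_assoc, trace_mul_comm u, ← Matrix.mul_assoc]

variable {g : LieSubalgebra ℝ (Matrix n n ℂ)}

theorem disjoint_span_center_span_lie (hg : g ≤ skewHermitianLieSubalgebra n) :
    Disjoint (span ℂ (centerSubmodule g : Set (Matrix n n ℂ)))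
      (span ℂ {x | ∃ u ∈ g, ∃ v ∈ g, ⁅u, v⁆ = x}) := by
  have htrace : ∀ z ∈ span ℂ (centerSubmodule g : Set (Matrix n n ℂ)),
      ∀ y ∈ span ℂ {x | ∃ u ∈ g, ∃ v ∈ g, ⁅u, v⁆ = x}, trace (z * y) = 0 := by
    intro z hz y hy
    simpa using LinearMap.BilinMap.apply_apply_mem_of_mem_span (⊥ : Submodule ℂ ℂ) _ _
      ((LinearMap.mul ℂ (Matrix n n ℂ)).compr₂ (traceLinearMap n ℂ ℂ))
      (by rintro z ⟨-, hz⟩ _ ⟨u, hu, v, -, rfl⟩; simpa using trace_mul_lie_eq_zero (hz u hu) v)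
      z y hz hy
  rw [Submodule.disjoint_def]
  intro x hxz hxl
  obtain ⟨a, ha, b, hb, rfl⟩ :=
    (centerSubmodule g).exists_add_I_smul_of_mem_span_complex hxz
  have hconj : (a + I • b)ᴴ = -a + I • b := by
    rw [conjTranspose_add, conjTranspose_smul, hg ha.1, hg hb.1]
    simp
  rw [← trace_conjTranspose_mul_self_eq_zero_iff, hconj]
  exact htrace _ (add_mem (neg_mem (subset_span ha)) (smul_mem _ _ (subset_span hb))) _ hxl

theorem mem_span_center_of_forall_lie_eq_zero (hg : g ≤ skewHermitianLieSubalgebra n)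
    {x : Matrix n n ℂ} (hx : x ∈ span ℂ (g : Set (Matrix n n ℂ))) (hxg : ∀ X ∈ g, ⁅x, X⁆ = 0) :
    x ∈ span ℂ (centerSubmodule g : Set (Matrix n n ℂ)) := by
  obtain ⟨a, ha, b, hb, rfl⟩ := g.toSubmodule.exists_add_I_smul_of_mem_span_complex hx
  have hb_central : ∀ X ∈ g, ⁅b, X⁆ = 0 := fun X hX =>
    eq_zero_of_skewHermitian_add_I_smul (hg (g.lie_mem ha hX)) (hg (g.lie_mem hb hX))
      (by rw [← smul_lie, ← add_lie, hxg X hX]; exact zero_mem _)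
  have ha_central : ∀ X ∈ g, ⁅a, X⁆ = 0 := fun X hX => by
    simpa [hb_central X hX] using hxg X hX
  exact add_mem (subset_span ⟨ha, ha_central⟩) (smul_mem _ _ (subset_span ⟨hb, hb_central⟩))

theorem exists_projection_span_center (hg : g ≤ skewHermitianLieSubalgebra n) :
    ∃ π : Matrix n n ℂ →ₗ[ℂ] Matrix n n ℂ,
      (∀ x ∈ span ℂ (centerSubmodule g : Set (Matrix n n ℂ)), π x = x) ∧
      (∀ u ∈ g, ∀ v ∈ g, π ⁅u, v⁆ = 0) ∧
      ∀ x, π x ∈ span ℂ (centerSubmodule g : Set (Matrix n n ℂ)) := by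
  obtain ⟨q, hle, hq⟩ := (disjoint_span_center_span_lie hg).symm.exists_isCompl
  refine ⟨Submodule.projection _ q hq.symm, fun x hx => projection_apply_of_mem_left _ hx,
    fun u hu v hv => ?_, projection_apply_mem _⟩
  exact (projection_apply_eq_zero_iff _).mpr (hle (subset_span ⟨u, hu, v, hv, rfl⟩))

end Center

section KroneckerExtension

variable {n m : Type*} [Fintype m] [DecidableEq m]

noncomputable def kronPowSpan (S : Set (Matrix n n ℂ)) (χ : Matrix m m ℂ) :
    Submodule ℝ (Matrix (n × m) (n × m) ℂ) :=
  span ℝ {x | ∃ X ∈ S, ∃ k : ℕ, X ⊗ₖ (χ ^ k) = x}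

variable {χ : Matrix m m ℂ}

theorem kronPowSpan_mono {S T : Set (Matrix n n ℂ)} (h : S ⊆ T) :
    kronPowSpan S χ ≤ kronPowSpan T χ :=
  span_mono fun _ ⟨X, hX, k, hx⟩ => ⟨X, h hX, k, hx⟩

theorem kronBlock_mem_span_of_mem_kronPowSpan {S : Set (Matrix n n ℂ)}
    {x : Matrix (n × m) (n × m) ℂ} (hx : x ∈ kronPowSpan S χ) (p q : m) :
    kronBlock p q x ∈ span ℂ S := by
  refine (span_le (p := (span ℂ S).restrictScalars ℝ |>.comap
    ((kronBlock p q).restrictScalars ℝ))).mpr ?_ hx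
  rintro _ ⟨X, hX, k, rfl⟩
  simpa [kronBlock_kronecker] using smul_mem _ _ (subset_span hX)

theorem blockwiseMap_eq_zero_of_mem_kronPowSpan {S : Set (Matrix n n ℂ)}
    {f : Matrix n n ℂ →ₗ[ℂ] Matrix n n ℂ} (hf : ∀ X ∈ S, f X = 0)
    {x : Matrix (n × m) (n × m) ℂ} (hx : x ∈ kronPowSpan S χ) : blockwiseMap f x = 0 := by
  refine (span_le (p := LinearMap.ker ((blockwiseMap f).restrictScalars ℝ))).mpr ?_ hx
  rintro _ ⟨X, hX, k, rfl⟩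
  simp [blockwiseMap_kronecker, hf X hX]

variable [Fintype n] [DecidableEq n]

theorem lie_mem_kronPowSpan {S T : Set (Matrix n n ℂ)} {x y : Matrix (n × m) (n × m) ℂ}
    (hx : x ∈ kronPowSpan S χ) (hy : y ∈ kronPowSpan T χ) :
    ⁅x, y⁆ ∈ kronPowSpan {z | ∃ u ∈ S, ∃ v ∈ T, ⁅u, v⁆ = z} χ := by
  refine LinearMap.BilinMap.apply_apply_mem_of_mem_span _ _ _
    (LinearMap.mk₂ ℝ (fun x y : Matrix (n × m) (n × m) ℂ => ⁅x, y⁆) add_lie smul_lie lie_add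
      lie_smul) ?_ x y hx hy
  rintro _ ⟨X, hX, j, rfl⟩ _ ⟨Y, hY, k, rfl⟩
  rw [LinearMap.mk₂_apply, Matrix.kronecker_lie_kronecker X Y (Commute.pow_pow_self χ j k),
    ← pow_add]
  exact subset_span ⟨_, ⟨X, hX, Y, hY, rfl⟩, j + k, rfl⟩

theorem lie_eq_zero_of_mem_kronPowSpan {S T : Set (Matrix n n ℂ)}
    (hST : ∀ u ∈ S, ∀ v ∈ T, ⁅u, v⁆ = 0) {x y : Matrix (n × m) (n × m) ℂ}
    (hx : x ∈ kronPowSpan S χ) (hy : y ∈ kronPowSpan T χ) : ⁅x, y⁆ = 0 := by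
  have h := lie_mem_kronPowSpan hx hy
  rwa [kronPowSpan, span_eq_bot.mpr, mem_bot] at h
  rintro _ ⟨_, ⟨u, hu, v, hv, rfl⟩, k, rfl⟩
  rw [hST u hu v hv, zero_kronecker]

end KroneckerExtension

section Generators

variable {n m ι : Type*} [Fintype n] [DecidableEq n] [Fintype m] [DecidableEq m]

def kronGens (A : ι → Matrix n n ℂ) (χ : Matrix m m ℂ) : Set (Matrix (n × m) (n × m) ℂ) :=
  (Set.range fun i => A i ⊗ₖ (1 : Matrix m m ℂ)) ∪ Set.range fun i => A i ⊗ₖ χ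

variable {A : ι → Matrix n n ℂ} {χ : Matrix m m ℂ}

theorem dla_kronGens_le_skewHermitianLieSubalgebra (hA : ∀ i, (A i)ᴴ = -A i)
    (hχ : χ.IsHermitian) : DLA (kronGens A χ) ≤ skewHermitianLieSubalgebra (n × m) := by
  refine dla_le_skewHermitianLieSubalgebra ?_
  rintro _ (⟨i, rfl⟩ | ⟨i, rfl⟩)
  · rw [conjTranspose_kronecker, hA i, neg_kronecker, conjTranspose_one]
  · rw [conjTranspose_kronecker, hA i, neg_kronecker, hχ.eq]

theorem kronecker_mem_dla_kronGens {X : Matrix n n ℂ} (hX : X ∈ DLA (Set.range A)) :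
    X ⊗ₖ (1 : Matrix m m ℂ) ∈ DLA (kronGens A χ) ∧ X ⊗ₖ χ ∈ DLA (kronGens A χ) := by
  induction hX using LieSubalgebra.lieSpan_induction with
  | mem _ h =>
    obtain ⟨i, rfl⟩ := h
    exact ⟨LieSubalgebra.subset_lieSpan (Or.inl ⟨i, rfl⟩),
      LieSubalgebra.subset_lieSpan (Or.inr ⟨i, rfl⟩)⟩
  | zero => simpa only [zero_kronecker] using ⟨zero_mem _, zero_mem _⟩
  | add X Y _ _ hX hY =>
    simpa only [add_kronecker] using ⟨add_mem hX.1 hY.1, add_mem hX.2 hY.2⟩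
  | smul c X _ hX => simpa only [smul_kronecker] using ⟨smul_mem _ c hX.1, smul_mem _ c hX.2⟩
  | lie X Y _ _ hX hY =>
    have h_one := (DLA (kronGens A χ)).lie_mem hX.1 hY.1
    have h_χ := (DLA (kronGens A χ)).lie_mem hX.1 hY.2
    rw [Matrix.kronecker_lie_kronecker X Y (Commute.one_left _), one_mul] at h_one h_χ
    exact ⟨h_one, h_χ⟩

theorem mem_kronPowSpan_of_mem_dla_kronGens {x : Matrix (n × m) (n × m) ℂ}
    (hx : x ∈ DLA (kronGens A χ)) : x ∈ kronPowSpan (DLA (Set.range A) : Set (Matrix n n ℂ)) χ := by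
  induction hx using LieSubalgebra.lieSpan_induction with
  | mem _ h =>
    rcases h with ⟨i, rfl⟩ | ⟨i, rfl⟩
    · exact subset_span ⟨A i, LieSubalgebra.subset_lieSpan ⟨i, rfl⟩, 0, by rw [pow_zero]⟩
    · exact subset_span ⟨A i, LieSubalgebra.subset_lieSpan ⟨i, rfl⟩, 1, by rw [pow_one]⟩
  | zero => exact zero_mem _
  | add _ _ _ _ hx hy => exact add_mem hx hy
  | smul c _ _ hx => exact smul_mem _ c hx
  | lie _ _ _ _ hx hy =>
    refine kronPowSpan_mono ?_ (lie_mem_kronPowSpan hx hy)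
    rintro _ ⟨u, hu, v, hv, rfl⟩
    exact (DLA _).lie_mem hu hv

theorem kronecker_mem_center_dla_kronGens {C : Matrix n n ℂ}
    (hC : C ∈ centerSubmodule (DLA (Set.range A))) :
    C ⊗ₖ (1 : Matrix m m ℂ) ∈ centerSubmodule (DLA (kronGens A χ)) ∧
      C ⊗ₖ χ ∈ centerSubmodule (DLA (kronGens A χ)) := by
  have hcentral (k : ℕ) : ∀ v ∈ DLA (kronGens A χ), ⁅C ⊗ₖ (χ ^ k), v⁆ = 0 := fun v hv =>
    lie_eq_zero_of_mem_kronPowSpan (S := {C}) (by rintro _ rfl; exact hC.2)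
      (subset_span ⟨C, rfl, k, rfl⟩) (mem_kronPowSpan_of_mem_dla_kronGens hv)
  obtain ⟨h_one, h_χ⟩ := kronecker_mem_dla_kronGens (χ := χ) hC.1
  exact ⟨⟨h_one, by simpa using hcentral 0⟩, ⟨h_χ, by simpa using hcentral 1⟩⟩

theorem kronBlock_mem_span_center (hA : DLA (Set.range A) ≤ skewHermitianLieSubalgebra n)
    {U : Matrix (n × m) (n × m) ℂ} (hU : U ∈ centerSubmodule (DLA (kronGens A χ))) (p q : m) :
    kronBlock p q U ∈ span ℂ (centerSubmodule (DLA (Set.range A)) : Set (Matrix n n ℂ)) :=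
  mem_span_center_of_forall_lie_eq_zero hA
    (kronBlock_mem_span_of_mem_kronPowSpan (mem_kronPowSpan_of_mem_dla_kronGens hU.1) p q)
    fun X hX => by
      rw [← kronBlock_lie_kronecker_one, hU.2 _ (kronecker_mem_dla_kronGens hX).1, map_zero]

theorem blockwiseMap_mem_span_of_mem_dla_kronGens {f : Matrix n n ℂ →ₗ[ℂ] Matrix n n ℂ}
    (hf : ∀ u ∈ DLA (Set.range A), ∀ v ∈ DLA (Set.range A), f ⁅u, v⁆ = 0)
    {W : Set (Matrix n n ℂ)} (hW : ∀ i, f (A i) ∈ span ℂ W)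
    {x : Matrix (n × m) (n × m) ℂ} (hx : x ∈ DLA (kronGens A χ)) :
    blockwiseMap f x ∈
      span ℂ ((fun C => C ⊗ₖ (1 : Matrix m m ℂ)) '' W ∪ (fun C => C ⊗ₖ χ) '' W) := by
  have kronecker_mem (Y : Matrix m m ℂ) (i : ι) : f (A i) ⊗ₖ Y ∈ span ℂ ((· ⊗ₖ Y) '' W) :=
    apply_mem_span_image_of_mem_span ((kroneckerBilinear (R := ℂ)).flip Y) (hW i)
  induction hx using LieSubalgebra.lieSpan_induction with
  | mem _ h =>
    rcases h with ⟨i, rfl⟩ | ⟨i, rfl⟩ <;> rw [blockwiseMap_kronecker]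
    · exact span_mono Set.subset_union_left (kronecker_mem 1 i)
    · exact span_mono Set.subset_union_right (kronecker_mem χ i)
  | zero => simp
  | add _ _ _ _ hx hy => rw [map_add]; exact add_mem hx hy
  | smul c _ _ hx => rw [LinearMap.map_smul_of_tower]; exact smul_of_tower_mem _ c hx
  | lie x y hx hy _ _ =>
    rw [blockwiseMap_eq_zero_of_mem_kronPowSpan ?_ (lie_mem_kronPowSpan
      (mem_kronPowSpan_of_mem_dla_kronGens hx) (mem_kronPowSpan_of_mem_dla_kronGens hy))]
    · exact zero_mem _
    · rintro _ ⟨u, hu, v, hv, rfl⟩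
      exact hf u hu v hv

theorem span_kronecker_center_le_center :
    span ℝ ((fun C => C ⊗ₖ (1 : Matrix m m ℂ)) ''
        (centerSubmodule (DLA (Set.range A)) : Set (Matrix n n ℂ))) ⊔
      span ℝ ((fun C => C ⊗ₖ χ) '' (centerSubmodule (DLA (Set.range A)) : Set (Matrix n n ℂ))) ≤
      centerSubmodule (DLA (kronGens A χ)) :=
  sup_le (span_le.mpr fun _ ⟨_, hC, hx⟩ => hx ▸ (kronecker_mem_center_dla_kronGens hC).1)
    (span_le.mpr fun _ ⟨_, hC, hx⟩ => hx ▸ (kronecker_mem_center_dla_kronGens hC).2)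

theorem center_le_span_kronecker_center (hA : ∀ i, (A i)ᴴ = -A i) (hχ : χ.IsHermitian) :
    centerSubmodule (DLA (kronGens A χ)) ≤
      span ℝ ((fun C => C ⊗ₖ (1 : Matrix m m ℂ)) ''
          (centerSubmodule (DLA (Set.range A)) : Set (Matrix n n ℂ))) ⊔
        span ℝ ((fun C => C ⊗ₖ χ) ''
          (centerSubmodule (DLA (Set.range A)) : Set (Matrix n n ℂ))) := by
  intro U hU
  have hA_skew : DLA (Set.range A) ≤ skewHermitianLieSubalgebra n :=
    dla_le_skewHermitianLieSubalgebra (Set.forall_mem_range.mpr hA)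
  have hg_skew := dla_kronGens_le_skewHermitianLieSubalgebra hA hχ
  obtain ⟨π, hπ_fix, hπ_lie, hπ_mem⟩ := exists_projection_span_center hA_skew
  have hπU : blockwiseMap π U = U :=
    blockwiseMap_eq_self fun p q => hπ_fix _ (kronBlock_mem_span_center hA_skew hU p q)
  have hU_span := blockwiseMap_mem_span_of_mem_dla_kronGens hπ_lie (fun i => hπ_mem (A i)) hU.1
  rw [hπU] at hU_span
  refine mem_of_mem_span_complex_of_le_skewHermitian
    (fun x hx => hg_skew (span_kronecker_center_le_center hx).1) (span_mono ?_ hU_span)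
    (hg_skew hU.1)
  exact Set.union_subset (fun x hx => mem_sup_left (subset_span hx))
    (fun x hx => mem_sup_right (subset_span hx))

end Generators

theorem stmt11_general {l N M : ℕ} (A : Fin l → Matrix (Fin N) (Fin N) ℂ)
    (hA : IsDynGenSet A)
    (χ : Matrix (Fin M) (Fin M) ℂ) (hχ : χ.IsHermitian) :
    centerSubmodule (DLA ((Set.range fun i => A i ⊗ₖ (1 : Matrix (Fin M) (Fin M) ℂ)) ∪
        (Set.range fun i => A i ⊗ₖ χ))) =
      Submodule.span ℝ
          ((fun C => C ⊗ₖ (1 : Matrix (Fin M) (Fin M) ℂ)) ''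
            (centerSubmodule (DLA (Set.range A)) : Set (Matrix (Fin N) (Fin N) ℂ))) ⊔
        Submodule.span ℝ
          ((fun C => C ⊗ₖ χ) ''
            (centerSubmodule (DLA (Set.range A)) : Set (Matrix (Fin N) (Fin N) ℂ))) :=
  le_antisymm (center_le_span_kronecker_center hA.2.2.2 hχ) span_kronecker_center_le_center

/-- For the generating set `𝒜_[L] = {A_i ⊗ I_M} ∪ {A_i ⊗ χ}`, the center of the
generated DLA is `span{C ⊗ I_M : C ∈ Z(g_𝒜)} + span{C ⊗ χ : C ∈ Z(g_𝒜)}`. -/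
theorem stmt11 {l N M K : ℕ} (A : Fin l → Matrix (Fin N) (Fin N) ℂ)
    (hA : IsDynGenSet A)
    (χ : Matrix (Fin M) (Fin M) ℂ) (hχ : χ.IsHermitian)
    (hK : (spectrum ℂ χ).ncard = K) :
    centerSubmodule (DLA ((Set.range fun i => A i ⊗ₖ (1 : Matrix (Fin M) (Fin M) ℂ)) ∪
        (Set.range fun i => A i ⊗ₖ χ))) =
      Submodule.span ℝ
          ((fun C => C ⊗ₖ (1 : Matrix (Fin M) (Fin M) ℂ)) ''
            (centerSubmodule (DLA (Set.range A)) : Set (Matrix (Fin N) (Fin N) ℂ))) ⊔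
        Submodule.span ℝ
          ((fun C => C ⊗ₖ χ) ''
            (centerSubmodule (DLA (Set.range A)) : Set (Matrix (Fin N) (Fin N) ℂ))) :=
  stmt11_general A hA χ hχ
end

section
/- Let 𝒜 = {A₁, …, A_L} be a dynamical generating set of N×N matrices such that A_j² = −I for every j ∈ [L], and such that for all j, k ∈ [L] either A_jA_k = A_kA_j or A_jA_k = −A_kA_j (these conditions hold when each A_j is i times an n-qubit Pauli string). Assume the anticommutation graph of 𝒜 — the simple graph on vertex set [L] with an edge between j and k whenever A_jA_k = −A_kA_j — is connected. Let χ be a Hermitian M×M complex matrix with exactly K distinct eigenvalues. Then for every i ∈ [L], the DLA g_{𝒜_i} generated by 𝒜_i = {A₁ ⊗ I_M, …, A_L ⊗ I_M, A_i ⊗ χ} is isomorphic, as a real Lie algebra, to the direct sum ⊕_{j=1}^{K} g_𝒜 of K copies of g_𝒜. -/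
open Matrix Kronecker

attribute [local instance 100] LieRing.ofAssociativeRing

open scoped DirectSum

/-- The anticommutation graph of a family of matrices: vertices are indices, with an edge
between `j` and `k` whenever `A_j` and `A_k` anticommute. -/
def anticommGraph {l N : ℕ} (A : Fin l → Matrix (Fin N) (Fin N) ℂ) : SimpleGraph (Fin l) :=
  SimpleGraph.fromRel fun j k => A j * A k = -(A k * A j)

/-!
Let `U` diagonalise `χ` and let `μ₁, …, μ_K` be its distinct eigenvalues. Conjugation by
`1 ⊗ U` followed by grouping equal eigenvalues identifies the algebra of matrices
`blockDiagonal (f ∘ c)` with `K` copies of the `N × N` matrices: `A_j ⊗ I` becomes the constant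
family `(A_j, …, A_j)` and `A_i ⊗ χ` becomes `(μ₁ A_i, …, μ_K A_i)`.

Along an edge `u ~ v` of the anticommutation graph, `⁅A_u, ⁅A_u, A_v⁆⁆ = -4 A_v`. Using a neighbour
`A_j` of `A_i`, a bracket of `w • A_i` and `w' • A_i` (weights `w, w' : Fin K → ℝ`) with the
constants `A_i`, `A_j` gives `w w' • A_i`, so every polynomial in `μ` is a weight of `A_i`, and
Lagrange interpolation isolates `A_i` in each single copy. The relation along edges and the
connectivity of the graph spread this to every `A_j`, so the generated algebra is all of `g_𝒜^K`.
-/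

lemma SimpleGraph.Connected.forall_of_adj {V : Type*} {G : SimpleGraph V} (hG : G.Connected)
    {P : V → Prop} (hP : ∀ u v, G.Adj u v → P u → P v) {i : V} (hi : P i) (j : V) : P j := by
  obtain ⟨w⟩ := hG.preconnected i j
  induction w with
  | nil => exact hi
  | cons h _ ih => exact ih (hP _ _ h hi)

lemma Pi.algebra_adjoin_singleton_eq_top {R ι : Type*} [Field R] [Fintype ι] [DecidableEq ι]
    {μ : ι → R} (hμ : Function.Injective μ) : Algebra.adjoin R {μ} = ⊤ := by
  refine eq_top_iff.2 fun f _ => ?_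
  rw [← Finset.univ_sum_single f]
  refine Subalgebra.sum_mem _ fun k _ => ?_
  have hbasis : Pi.single k (f k) = f k • Polynomial.aeval μ (Lagrange.basis Finset.univ μ k) := by
    funext j
    rcases eq_or_ne j k with rfl | hjk
    · simp [Lagrange.eval_basis_self hμ.injOn]
    · simp [Lagrange.eval_basis_of_ne hjk.symm, hjk]
  rw [hbasis]
  exact Subalgebra.smul_mem _ (Polynomial.aeval_mem_adjoin_singleton _ _) _

section Associative

variable {R A ι : Type*}

lemma lie_lie_eq_neg_four_smul [CommRing R] [Ring A] [Algebra R A] {a b : A} (ha : a * a = -1)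
    (hab : a * b = -(b * a)) : ⁅a, ⁅a, b⁆⁆ = (-4 : R) • b := by
  have haba : a * b * a = b := by rw [hab, neg_mul, mul_assoc, ha, mul_neg_one, neg_neg]
  have hexpand : ⁅a, ⁅a, b⁆⁆ = a * a * b - a * b * a - a * b * a + b * (a * a) := by
    simp only [Ring.lie_def]
    noncomm_ring
  rw [hexpand, haba, ha, neg_one_mul, mul_neg_one]
  module

lemma Pi.lie_single_single [Ring A] [DecidableEq ι] (k : ι) (x y : A) :
    ⁅(Pi.single k x : ι → A), Pi.single k y⁆ = (Pi.single k ⁅x, y⁆ : ι → A) :=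
  (Pi.single_op₂ (fun _ => (⁅·, ·⁆ : A → A → A)) (fun _ => lie_zero 0) k x y).symm

lemma Pi.lie_const_single [Ring A] [DecidableEq ι] (k : ι) (x y : A) :
    ⁅Function.const ι x, Pi.single k y⁆ = (Pi.single k ⁅x, y⁆ : ι → A) := by
  funext j
  rcases eq_or_ne j k with rfl | h
  · simp
  · simp [h]

namespace LieSubalgebra

variable [CommRing R] [Ring A] [Algebra R A]

def pi (ι : Type*) (H : LieSubalgebra R A) : LieSubalgebra R (ι → A) where
  carrier := {f | ∀ k, f k ∈ H}
  add_mem' hf hg k := H.add_mem (hf k) (hg k)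
  zero_mem' _ := H.zero_mem
  smul_mem' t _ hf k := H.smul_mem t (hf k)
  lie_mem' hf hg k := H.lie_mem (hf k) (hg k)

noncomputable def piEquivDirectSum [Fintype ι] (H : LieSubalgebra R A) :
    H.pi ι ≃ₗ⁅R⁆ ⨁ _ : ι, H where
  toFun f := DFinsupp.equivFunOnFintype.symm fun k => ⟨f.1 k, f.2 k⟩
  invFun x := ⟨fun k => x k, fun k => (x k).2⟩
  left_inv _ := rfl
  right_inv _ := DFinsupp.ext fun _ => rfl
  map_add' _ _ := DFinsupp.ext fun _ => rfl
  map_smul' _ _ := DFinsupp.ext fun _ => rfl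
  map_lie' := DFinsupp.ext fun _ => rfl

variable [DecidableEq ι]

def comapSingle (H : LieSubalgebra R (ι → A)) : LieSubalgebra R A where
  carrier := {x | ∀ k, Pi.single k x ∈ H}
  add_mem' hx hy k := by rw [Pi.single_add]; exact H.add_mem (hx k) (hy k)
  zero_mem' k := by rw [Pi.single_zero]; exact H.zero_mem
  smul_mem' t _ hx k := by rw [Pi.single_smul]; exact H.smul_mem t (hx k)
  lie_mem' hx hy k := by rw [← Pi.lie_single_single]; exact H.lie_mem (hx k) (hy k)

lemma lie_mem_comapSingle {H : LieSubalgebra R (ι → A)} {z x : A}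
    (hz : Function.const ι z ∈ H) (hx : x ∈ H.comapSingle) : ⁅z, x⁆ ∈ H.comapSingle := fun k => by
  rw [← Pi.lie_const_single]
  exact H.lie_mem hz (hx k)

end LieSubalgebra

end Associative

section WeightedCopies

variable {R A ι : Type*} [Field R] [Ring A] [Algebra R A]
  {H : LieSubalgebra R (ι → A)} {x y : A} {c : R}

lemma smul_const_mul_mem (hc : c ≠ 0) (hxy : ⁅x, ⁅x, y⁆⁆ = c • y) (hyx : ⁅y, ⁅y, x⁆⁆ = c • x)
    (hx : Function.const ι x ∈ H) (hy : Function.const ι y ∈ H) {w w' : ι → R}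
    (hw : (fun k => w k • x) ∈ H) (hw' : (fun k => w' k • x) ∈ H) :
    (fun k => (w * w') k • x) ∈ H := by
  have hxyx : ⁅x, ⁅y, x⁆⁆ = -(c • y) := by rw [← lie_skew y x, lie_neg, hxy]
  have hchain : ⁅Function.const ι y, ⁅⁅(fun k => w k • x : ι → A),
      ⁅Function.const ι y, fun k => w' k • x⁆⁆, Function.const ι x⁆⁆ =
        (-(c * c)) • fun k => (w * w') k • x := by
    funext k
    simp only [LieRing.lie_apply, Function.const_apply, Pi.smul_apply, Pi.mul_apply,
      lie_smul (R := R), smul_lie (R := R), hxyx, hyx, neg_lie, lie_neg, smul_neg, smul_smul]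
    rw [← neg_smul]
    ring_nf
  have hmem := H.smul_mem (-(c * c))⁻¹
    (H.lie_mem hy (H.lie_mem (H.lie_mem hw (H.lie_mem hy hw')) hx))
  rwa [hchain, smul_smul, inv_mul_cancel₀ (neg_ne_zero.2 (mul_ne_zero hc hc)), one_smul] at hmem

lemma smul_const_mem_of_mem_adjoin (hc : c ≠ 0) (hxy : ⁅x, ⁅x, y⁆⁆ = c • y)
    (hyx : ⁅y, ⁅y, x⁆⁆ = c • x) (hx : Function.const ι x ∈ H) (hy : Function.const ι y ∈ H)
    {μ : ι → R} (hμ : (fun k => μ k • x) ∈ H) {w : ι → R} (hw : w ∈ Algebra.adjoin R {μ}) :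
    (fun k => w k • x) ∈ H := by
  induction hw using Algebra.adjoin_induction with
  | mem w hw => rwa [Set.mem_singleton_iff.1 hw]
  | algebraMap r => exact H.smul_mem r hx
  | add w w' _ _ hw hw' =>
    convert H.add_mem hw hw' using 1
    funext k
    exact add_smul _ _ _
  | mul w w' _ _ hw hw' => exact smul_const_mul_mem hc hxy hyx hx hy hw hw'

variable [Fintype ι] [DecidableEq ι]

lemma single_mem_of_smul_const_mem (hc : c ≠ 0) (hxy : ⁅x, ⁅x, y⁆⁆ = c • y)
    (hyx : ⁅y, ⁅y, x⁆⁆ = c • x) (hx : Function.const ι x ∈ H) (hy : Function.const ι y ∈ H)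
    {μ : ι → R} (hμinj : Function.Injective μ) (hμ : (fun k => μ k • x) ∈ H) (k : ι) :
    Pi.single k x ∈ H := by
  have hmem := smul_const_mem_of_mem_adjoin hc hxy hyx hx hy hμ
    (w := Pi.single k 1) (by simp [Pi.algebra_adjoin_singleton_eq_top hμinj])
  convert hmem using 1
  funext j
  rcases eq_or_ne j k with rfl | hjk
  · simp
  · simp [hjk]

theorem lieSpan_const_union_smul_eq_pi {V : Type*} [Nontrivial V] {G : SimpleGraph V}
    (hG : G.Connected) (a : V → A) (hc : c ≠ 0)
    (ha : ∀ u v, G.Adj u v → ⁅a u, ⁅a u, a v⁆⁆ = c • a v) (i : V) {μ : ι → R}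
    (hμ : Function.Injective μ) :
    LieSubalgebra.lieSpan R (ι → A)
        (Set.range (fun j => Function.const ι (a j)) ∪ {fun k => μ k • a i}) =
      (LieSubalgebra.lieSpan R A (Set.range a)).pi ι := by
  set H := LieSubalgebra.lieSpan R (ι → A)
    (Set.range (fun j => Function.const ι (a j)) ∪ {fun k => μ k • a i})
  set g := LieSubalgebra.lieSpan R A (Set.range a)
  have hconst : ∀ j, Function.const ι (a j) ∈ H := fun j =>
    LieSubalgebra.subset_lieSpan (Or.inl ⟨j, rfl⟩)
  obtain ⟨j, hij⟩ := hG.preconnected.exists_adj_of_nontrivial i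
  have hi : a i ∈ H.comapSingle :=
    single_mem_of_smul_const_mem hc (ha i j hij) (ha j i hij.symm) (hconst i) (hconst j) hμ
      (LieSubalgebra.subset_lieSpan (Or.inr rfl))
  -- `a v = -c⁻¹ • ⁅a u, ⁅a v, a u⁆⁆` is obtained from `a u` by brackets with constants
  have hstep : ∀ u v, G.Adj u v → a u ∈ H.comapSingle → a v ∈ H.comapSingle := by
    intro u v huv hu
    have hmem := H.comapSingle.smul_mem (-c⁻¹) (LieSubalgebra.lie_mem_comapSingle (hconst u)
      (LieSubalgebra.lie_mem_comapSingle (hconst v) hu))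
    rwa [← lie_skew (a v) (a u), lie_neg, ha u v huv, smul_neg, neg_smul, neg_neg, smul_smul,
      inv_mul_cancel₀ hc, one_smul] at hmem
  have hg : g ≤ H.comapSingle := LieSubalgebra.lieSpan_le.2 <|
    Set.range_subset_iff.2 (hG.forall_of_adj hstep hi)
  refine le_antisymm (LieSubalgebra.lieSpan_le.2 ?_) fun f hf => ?_
  · rintro _ (⟨j, rfl⟩ | rfl) k
    · exact LieSubalgebra.subset_lieSpan ⟨j, rfl⟩
    · exact g.smul_mem _ (LieSubalgebra.subset_lieSpan ⟨i, rfl⟩)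
  · rw [← Finset.univ_sum_single f]
    exact sum_mem fun k _ => hg (hf k) k

end WeightedCopies
lemma Function.exists_surjective_fin_injective_comp_of_ncard_range {α β : Type*} [Finite α]
    (d : α → β) {K : ℕ} (hK : (Set.range d).ncard = K) :
    ∃ (c : α → Fin K) (μ : Fin K → β), Function.Surjective c ∧ Function.Injective μ ∧
      ∀ m, μ (c m) = d m := by
  let e : Set.range d ≃ Fin K := Finite.equivFinOfCardEq (by rw [Nat.card_coe_set_eq, hK])
  exact ⟨e ∘ Set.rangeFactorization d, (↑) ∘ e.symm,
    e.surjective.comp Set.rangeFactorization_surjective,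
    Subtype.val_injective.comp e.symm.injective,
    fun m => by simp [Set.rangeFactorization]⟩

namespace Matrix

lemma blockDiagonal_real_smul {n m : Type*} [DecidableEq m] (X : Matrix n n ℂ) (d : m → ℝ) :
    blockDiagonal (fun j => d j • X) = X ⊗ₖ diagonal (fun j => (d j : ℂ)) := by
  rw [kronecker_diagonal]
  congr 1
  funext j
  ext a b
  simp [Complex.real_smul, mul_comm]

lemma one_kronecker_mul_kronecker_mul {n m : Type*} [Fintype n] [DecidableEq n] [Fintype m]
    (U V Y : Matrix m m ℂ) (X : Matrix n n ℂ) :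
    ((1 : Matrix n n ℂ) ⊗ₖ U) * (X ⊗ₖ Y) * (1 ⊗ₖ V) = X ⊗ₖ (U * Y * V) := by
  rw [← mul_kronecker_mul, ← mul_kronecker_mul, one_mul, mul_one]

variable {n m ι : Type*} [Fintype n] [DecidableEq n] [Fintype m] [DecidableEq m]

def blockDiagonalAlgHom (R : Type*) {α : Type*} [CommSemiring R] [Semiring α] [Algebra R α] :
    (m → Matrix n n α) →ₐ[R] Matrix (n × m) (n × m) α :=
  AlgHom.mk' (blockDiagonalRingHom n m α) fun r f => blockDiagonal_smul r f

noncomputable def conjBlockDiagonal (U : unitary (Matrix m m ℂ)) (c : m → ι) :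
    (ι → Matrix n n ℂ) →ₐ[ℝ] Matrix (n × m) (n × m) ℂ :=
  (Unitary.conjStarAlgAut ℝ (Matrix (n × m) (n × m) ℂ)
      ⟨1 ⊗ₖ (U : Matrix m m ℂ), kronecker_mem_unitary (one_mem _) U.2⟩).toAlgEquiv.toAlgHom.comp <|
    (blockDiagonalAlgHom ℝ).comp
      (AlgHom.pi fun j => Pi.evalAlgHom ℝ (fun _ => Matrix n n ℂ) (c j))

lemma conjBlockDiagonal_apply (U : unitary (Matrix m m ℂ)) (c : m → ι) (f : ι → Matrix n n ℂ) :
    conjBlockDiagonal U c f = (1 ⊗ₖ (U : Matrix m m ℂ)) * blockDiagonal (fun j => f (c j)) *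
      (1 ⊗ₖ star (U : Matrix m m ℂ)) := by
  have hstar : (1 : Matrix n n ℂ) ⊗ₖ star (U : Matrix m m ℂ) =
      star (1 ⊗ₖ (U : Matrix m m ℂ)) := by
    simp [star_eq_conjTranspose, conjTranspose_kronecker]
  rw [hstar]
  rfl

lemma conjBlockDiagonal_injective (U : unitary (Matrix m m ℂ)) {c : m → ι}
    (hc : Function.Surjective c) : Function.Injective (conjBlockDiagonal (n := n) U c) :=
  (Unitary.conjStarAlgAut ℝ (Matrix (n × m) (n × m) ℂ) _).injective.comp <|
    blockDiagonal_injective.comp hc.injective_comp_right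

lemma conjBlockDiagonal_const (U : unitary (Matrix m m ℂ)) (c : m → ι) (X : Matrix n n ℂ) :
    conjBlockDiagonal U c (Function.const ι X) = X ⊗ₖ 1 := by
  simp only [conjBlockDiagonal_apply, Function.const_apply]
  rw [← kronecker_one, one_kronecker_mul_kronecker_mul, mul_one, Unitary.mul_star_self_of_mem U.2]

lemma conjBlockDiagonal_smul_const (U : unitary (Matrix m m ℂ)) (c : m → ι) (μ : ι → ℝ)
    (X : Matrix n n ℂ) :
    conjBlockDiagonal U c (fun k => μ k • X) =
      X ⊗ₖ ((U : Matrix m m ℂ) * diagonal (fun j => (μ (c j) : ℂ)) * star (U : Matrix m m ℂ)) := by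
  rw [conjBlockDiagonal_apply, blockDiagonal_real_smul, one_kronecker_mul_kronecker_mul]

lemma IsHermitian.conjBlockDiagonal_smul_eq_kronecker {χ : Matrix m m ℂ} (hχ : χ.IsHermitian)
    {c : m → ι} {μ : ι → ℝ} (hμc : ∀ j, μ (c j) = hχ.eigenvalues j) (X : Matrix n n ℂ) :
    conjBlockDiagonal hχ.eigenvectorUnitary c (fun k => μ k • X) = X ⊗ₖ χ := by
  have hd : (fun j => (μ (c j) : ℂ)) = RCLike.ofReal ∘ hχ.eigenvalues := funext fun j => by
    simp [hμc]
  rw [conjBlockDiagonal_smul_const, hd]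
  exact congrArg (X ⊗ₖ ·) hχ.spectral_theorem.symm

end Matrix

lemma lie_lie_of_anticommGraph_adj {l N : ℕ} {A : Fin l → Matrix (Fin N) (Fin N) ℂ}
    (hsq : ∀ j, A j ^ 2 = -1) {u v : Fin l} (huv : (anticommGraph A).Adj u v) :
    ⁅A u, ⁅A u, A v⁆⁆ = (-4 : ℝ) • A v := by
  refine lie_lie_eq_neg_four_smul (by rw [← sq, hsq]) ?_
  rcases ((SimpleGraph.fromRel_adj _ u v).1 huv).2 with h | h
  · exact h
  · rw [h, neg_neg]

theorem stmt13_general {l N M K : ℕ} (A : Fin l → Matrix (Fin N) (Fin N) ℂ)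
    (hA : IsDynGenSet A)
    (hsq : ∀ j, A j ^ 2 = -1)
    (hconn : (anticommGraph A).Connected)
    (χ : Matrix (Fin M) (Fin M) ℂ) (hχ : χ.IsHermitian)
    (hK : (spectrum ℂ χ).ncard = K) :
    ∀ i : Fin l,
      Nonempty
        (↥(DLA ((Set.range fun j => A j ⊗ₖ (1 : Matrix (Fin M) (Fin M) ℂ)) ∪
            {A i ⊗ₖ χ})) ≃ₗ⁅ℝ⁆
          (⨁ _ : Fin K, ↥(DLA (Set.range A)))) := by
  intro i
  have : Nontrivial (Fin l) := Fin.nontrivial_iff_two_le.2 hA.1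
  obtain ⟨c, μ, hc, hμ, hμc⟩ := Function.exists_surjective_fin_injective_comp_of_ncard_range
    hχ.eigenvalues (K := K) (by rw [← hK, hχ.spectrum_eq_image_range,
      Set.ncard_image_of_injective _ RCLike.ofReal_injective])
  set θ := Matrix.conjBlockDiagonal (n := Fin N) hχ.eigenvectorUnitary c with hθ
  have hgen : θ '' (Set.range (fun j => Function.const (Fin K) (A j)) ∪
      {fun k => μ k • A i}) = Set.range (fun j => A j ⊗ₖ (1 : Matrix (Fin M) (Fin M) ℂ)) ∪
        {A i ⊗ₖ χ} := by
    rw [Set.image_union, Set.image_singleton, ← Set.range_comp, hθ,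
      hχ.conjBlockDiagonal_smul_eq_kronecker hμc]
    simp only [Function.comp_def, Matrix.conjBlockDiagonal_const]
  have hDLA : DLA ((Set.range fun j => A j ⊗ₖ (1 : Matrix (Fin M) (Fin M) ℂ)) ∪ {A i ⊗ₖ χ}) =
      ((DLA (Set.range A)).pi (Fin K)).map θ.toLieHom := by
    rw [DLA, ← hgen, ← AlgHom.coe_toLieHom, ← LieSubalgebra.map_lieSpan,
      lieSpan_const_union_smul_eq_pi hconn A (by norm_num)
        (fun _ _ => lie_lie_of_anticommGraph_adj hsq) i hμ]
    rfl
  exact ⟨(LieEquiv.ofEq _ _ (by rw [hDLA])).trans <|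
    (LieSubalgebra.equivMapOfInjective _ _ (Matrix.conjBlockDiagonal_injective _ hc)).symm.trans
      (LieSubalgebra.piEquivDirectSum _)⟩

/-- If `𝒜 = {A₁, …, A_L}` is a dynamical generating set with `A_j² = -I`, any two members
commuting or anticommuting, and connected anticommutation graph (e.g. a connected Pauli
generating set), then for each `i`, adjoining `A_i ⊗ χ` to `{A_j ⊗ I_M}` generates a DLA
isomorphic to the direct sum of `K` copies of `g_𝒜`, where `χ` is Hermitian with exactly
`K` distinct eigenvalues. -/
theorem stmt13 {l N M K : ℕ} (A : Fin l → Matrix (Fin N) (Fin N) ℂ)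
    (hA : IsDynGenSet A)
    (hsq : ∀ j, A j ^ 2 = -1)
    (hcomm : ∀ j k, A j * A k = A k * A j ∨ A j * A k = -(A k * A j))
    (hconn : (anticommGraph A).Connected)
    (χ : Matrix (Fin M) (Fin M) ℂ) (hχ : χ.IsHermitian)
    (hK : (spectrum ℂ χ).ncard = K) :
    ∀ i : Fin l,
      Nonempty
        (↥(DLA ((Set.range fun j => A j ⊗ₖ (1 : Matrix (Fin M) (Fin M) ℂ)) ∪
            {A i ⊗ₖ χ})) ≃ₗ⁅ℝ⁆
          (⨁ _ : Fin K, ↥(DLA (Set.range A)))) :=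
  stmt13_general A hA hsq hconn χ hχ hK
end

section
/- Let 𝒜 = {A₁, A₂} be a dynamical generating set consisting of two ℝ-linearly independent, traceless, anti-Hermitian N×N complex matrices, and let χ be a Hermitian M×M complex matrix with exactly K distinct eigenvalues. For i ∈ {1,2}, let 𝒜_i = {A₁ ⊗ I_M, A₂ ⊗ I_M, A_i ⊗ χ}. Then the commutator subalgebra [g_{𝒜_i}, g_{𝒜_i}] of the DLA generated by 𝒜_i is isomorphic, as a real Lie algebra, to the direct sum ⊕_{j=1}^{K} [g_𝒜, g_𝒜] of K copies of [g_𝒜, g_𝒜]. -/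
open Matrix Kronecker

attribute [local instance 100] LieRing.ofAssociativeRing

open scoped DirectSum

/-!
Write `χ = ∑ λ_j P_j` with spectral projections `P_j`; by Lagrange interpolation each `P_j` is a
real polynomial in `χ`. Let `g` be the DLA of `{A₁, A₂}` and `k = [g, g]`. Since `g` consists of
skew-Hermitian matrices, `-Re tr (X Y)` is an invariant inner product on `g`, which forces
`[k, k] = k`.

The DLA `H` of `{A₁ ⊗ 1, A₂ ⊗ 1, A_i ⊗ χ}` lies in `g ⊗ span {P_j}`, so `[H, H] ⊆ k ⊗ span {P_j}`.
Conversely `g ⊗ 1 ⊆ H`, and the `Y ∈ g` with `Y ⊗ χ ∈ H` form an `ad g`-stable subspace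
containing `A_i`, hence containing `k`. Writing elements of `k` as sums of brackets of elements
of `k` propagates this to `k ⊗ χ^p`, so to `k ⊗ P_j ⊆ H`, and once more to `k ⊗ P_j ⊆ [H, H]`.
Finally, as the `P_j` are nonzero orthogonal idempotents, `(X_j) ↦ ∑ X_j ⊗ P_j` is an injective
Lie algebra map from `⨁_j k` onto `k ⊗ span {P_j}`.
-/

lemma lie_mem_of_mem_span {R L : Type*} [CommRing R] [LieRing L] [LieAlgebra R L]
    {s t : Set L} {T : Submodule R L} (h : ∀ x ∈ s, ∀ y ∈ t, ⁅x, y⁆ ∈ T) {u v : L}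
    (hu : u ∈ Submodule.span R s) (hv : v ∈ Submodule.span R t) : ⁅u, v⁆ ∈ T :=
  LinearMap.BilinMap.apply_apply_mem_of_mem_span T s t
    (LieModule.toEnd R L L : L →ₗ[R] Module.End R L) h u v hu hv

lemma Submodule.eq_of_le_of_forall_apply_eq_zero {K E : Type*} [Field K] [AddCommGroup E]
    [Module K E] [FiniteDimensional K E] (B : E →ₗ[K] E →ₗ[K] K) {V W : Submodule K E}
    (hWV : W ≤ V) (h : ∀ x ∈ V, (∀ y ∈ W, B x y = 0) → x = 0) : W = V := by
  have hinj : Function.Injective (B.domRestrict₁₂ V W) := by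
    refine (injective_iff_map_eq_zero _).2 fun x hx => Subtype.ext (h x x.2 fun y hy => ?_)
    exact LinearMap.congr_fun hx ⟨y, hy⟩
  refine Submodule.eq_of_le_of_finrank_le hWV ?_
  simpa [Subspace.dual_finrank_eq] using LinearMap.finrank_le_finrank_of_injective hinj

section CommSub

variable {n : Type*} [Fintype n] [DecidableEq n]

lemma lie_mem_commSub {g : LieSubalgebra ℝ (Matrix n n ℂ)} {u v : Matrix n n ℂ}
    (hu : u ∈ g) (hv : v ∈ g) : ⁅u, v⁆ ∈ commSub g :=
  Submodule.subset_span ⟨u, hu, v, hv, rfl⟩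

lemma commSub_le_iff {g : LieSubalgebra ℝ (Matrix n n ℂ)} {T : Submodule ℝ (Matrix n n ℂ)} :
    commSub g ≤ T ↔ ∀ u ∈ g, ∀ v ∈ g, ⁅u, v⁆ ∈ T := by
  refine ⟨fun h u hu v hv => h (lie_mem_commSub hu hv), fun h => Submodule.span_le.2 ?_⟩
  rintro _ ⟨u, hu, v, hv, rfl⟩
  exact h u hu v hv

lemma commSub_le (g : LieSubalgebra ℝ (Matrix n n ℂ)) : commSub g ≤ g.toSubmodule :=
  commSub_le_iff.2 fun _ hu _ hv => g.lie_mem hu hv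

noncomputable def commSubAlg (g : LieSubalgebra ℝ (Matrix n n ℂ)) :
    LieSubalgebra ℝ (Matrix n n ℂ) :=
  { commSub g with
    lie_mem' := fun hx hy => lie_mem_commSub (commSub_le g hx) (commSub_le g hy) }

lemma conjTranspose_eq_neg_of_mem_DLA {S : Set (Matrix n n ℂ)} (hS : ∀ x ∈ S, xᴴ = -x)
    {X : Matrix n n ℂ} (hX : X ∈ DLA S) : Xᴴ = -X := by
  induction hX using LieSubalgebra.lieSpan_induction with
  | mem x hx => exact hS x hx
  | zero => simp
  | add x y _ _ hx hy => rw [conjTranspose_add, hx, hy, neg_add]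
  | smul a x _ hx => rw [conjTranspose_smul, hx, star_trivial, smul_neg]
  | lie x y _ _ hx hy =>
    rw [Ring.lie_def, conjTranspose_sub, conjTranspose_mul, conjTranspose_mul, hx, hy]
    simp only [neg_mul_neg, neg_sub]

/-- Modulo the `ad`-stable subspace `J`, the Lie algebra generated by `S` is spanned by `a`,
hence abelian. -/
lemma commSub_DLA_le {S : Set (Matrix n n ℂ)} {a : Matrix n n ℂ}
    {J : Submodule ℝ (Matrix n n ℂ)} (ha : a ∈ S) (hS : ∀ x ∈ S, x = a ∨ x ∈ J)
    (hJ : J ≤ (DLA S).toSubmodule) (hJad : ∀ x ∈ DLA S, ∀ y ∈ J, ⁅x, y⁆ ∈ J) :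
    commSub (DLA S) ≤ J := by
  have haDLA : a ∈ DLA S := LieSubalgebra.subset_lieSpan ha
  have hlie : ∀ u ∈ Submodule.span ℝ ({a} ∪ J), ∀ v ∈ Submodule.span ℝ ({a} ∪ J),
      ⁅u, v⁆ ∈ J := by
    refine fun u hu v hv => lie_mem_of_mem_span ?_ hu hv
    rintro x (rfl | hx) y (rfl | hy)
    · rw [lie_self]; exact J.zero_mem
    · exact hJad x haDLA y hy
    · rw [← lie_skew]; exact J.neg_mem (hJad y haDLA x hx)
    · exact hJad x (hJ hx) y hy
  have hDLA : ∀ x ∈ DLA S, x ∈ Submodule.span ℝ ({a} ∪ J) := by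
    intro x hx
    induction hx using LieSubalgebra.lieSpan_induction with
    | mem x hx => exact Submodule.subset_span (hS x hx)
    | zero => exact Submodule.zero_mem _
    | add x y _ _ hx hy => exact Submodule.add_mem _ hx hy
    | smul c x _ hx => exact Submodule.smul_mem _ c hx
    | lie x y _ _ hx hy => exact Submodule.subset_span (Or.inr (hlie x hx y hy))
  exact commSub_le_iff.2 fun u hu v hv => hlie u (hDLA u hu) v (hDLA v hv)

end CommSub

section TraceForm

variable {n : Type*} [Fintype n] [DecidableEq n]

noncomputable def traceForm : LinearMap.BilinForm ℝ (Matrix n n ℂ) :=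
  LinearMap.mk₂ ℝ (fun X Y => -(X * Y).trace.re)
    (fun X X' Y => by rw [add_mul, trace_add, Complex.add_re, neg_add])
    (fun c X Y => by simp [trace_smul])
    (fun X Y Y' => by rw [mul_add, trace_add, Complex.add_re, neg_add])
    (fun c X Y => by simp [trace_smul])

lemma traceForm_apply (X Y : Matrix n n ℂ) : traceForm X Y = -(X * Y).trace.re := rfl

lemma traceForm_apply_lie_apply (X Y Z : Matrix n n ℂ) :
    traceForm ⁅X, Y⁆ Z = traceForm X ⁅Y, Z⁆ := by
  simp only [traceForm_apply, Ring.lie_def, sub_mul, mul_sub, trace_sub, mul_assoc]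
  rw [trace_mul_comm Y (X * Z), mul_assoc]

open scoped ComplexOrder in
lemma eq_zero_of_traceForm_self_eq_zero {X : Matrix n n ℂ} (hX : Xᴴ = -X)
    (h : traceForm X X = 0) : X = 0 := by
  have hre : (Xᴴ * X).trace.re = 0 := by
    rwa [hX, neg_mul, trace_neg, Complex.neg_re, ← traceForm_apply]
  have him : (Xᴴ * X).trace.im = 0 :=
    (Complex.nonneg_iff.1 (posSemidef_conjTranspose_mul_self X).trace_nonneg).2.symm
  exact trace_conjTranspose_mul_self_eq_zero_iff.1 (Complex.ext hre him)

end TraceForm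

section Perfect

variable {n : Type*} [Fintype n] [DecidableEq n] {g : LieSubalgebra ℝ (Matrix n n ℂ)}

/-- An element of `[g, g]` orthogonal to `[[g, g], [g, g]]` is central in `g`, so it is also
orthogonal to `[g, g]`. -/
lemma eq_zero_of_forall_traceForm_eq_zero (hg : ∀ X ∈ g, Xᴴ = -X) {X : Matrix n n ℂ}
    (hX : X ∈ commSub g) (h : ∀ Y ∈ commSub (commSubAlg g), traceForm X Y = 0) : X = 0 := by
  have hXg : X ∈ g := commSub_le g hX
  have hskew : ∀ Y ∈ commSub g, Yᴴ = -Y := fun Y hY => hg Y (commSub_le g hY)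
  have hcomm : ∀ u ∈ commSub g, ⁅X, u⁆ = 0 := by
    intro u hu
    have hXu : ⁅X, u⁆ ∈ commSub g := lie_mem_commSub hXg (commSub_le g hu)
    refine eq_zero_of_traceForm_self_eq_zero (hskew _ hXu) ?_
    rw [traceForm_apply_lie_apply]
    exact h _ (lie_mem_commSub (g := commSubAlg g) hu hXu)
  have hcentral : ∀ u ∈ g, ⁅X, u⁆ = 0 := by
    intro u hu
    have hXu : ⁅X, u⁆ ∈ commSub g := lie_mem_commSub hXg hu
    refine eq_zero_of_traceForm_self_eq_zero (hskew _ hXu) ?_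
    nth_rw 1 [← lie_skew X u]
    rw [map_neg, LinearMap.neg_apply, traceForm_apply_lie_apply, hcomm _ hXu,
      map_zero, neg_zero]
  have hker : commSub g ≤ LinearMap.ker (traceForm X) := commSub_le_iff.2 fun u hu v _ => by
    rw [LinearMap.mem_ker, ← traceForm_apply_lie_apply, hcentral u hu, map_zero,
      LinearMap.zero_apply]
  exact eq_zero_of_traceForm_self_eq_zero (hg X hXg) (hker hX)

lemma commSub_commSubAlg (hg : ∀ X ∈ g, Xᴴ = -X) : commSub (commSubAlg g) = commSub g :=
  Submodule.eq_of_le_of_forall_apply_eq_zero traceForm (commSub_le (commSubAlg g))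
    fun _ hX h => eq_zero_of_forall_traceForm_eq_zero hg hX h

end Perfect

section Kronecker

variable {n m ι : Type*}

noncomputable def kroneckerRight (c : Matrix m m ℂ) :
    Matrix n n ℂ →ₗ[ℝ] Matrix (n × m) (n × m) ℂ :=
  (kroneckerBilinear (R := ℝ)).flip c

noncomputable def kroneckerSpan (V : Submodule ℝ (Matrix n n ℂ)) (P : ι → Matrix m m ℂ) :
    Submodule ℝ (Matrix (n × m) (n × m) ℂ) :=
  Submodule.span ℝ {x | ∃ X ∈ V, ∃ j, x = X ⊗ₖ P j}

lemma kronecker_mem_kroneckerSpan {V : Submodule ℝ (Matrix n n ℂ)} {P : ι → Matrix m m ℂ}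
    {X : Matrix n n ℂ} (hX : X ∈ V) (j : ι) : X ⊗ₖ P j ∈ kroneckerSpan V P :=
  Submodule.subset_span ⟨X, hX, j, rfl⟩

lemma kronecker_mem_kroneckerSpan_of_mem_span {V : Submodule ℝ (Matrix n n ℂ)}
    {P : ι → Matrix m m ℂ} {X : Matrix n n ℂ} {c : Matrix m m ℂ}
    (hX : X ∈ V) (hc : c ∈ Submodule.span ℝ (Set.range P)) : X ⊗ₖ c ∈ kroneckerSpan V P := by
  have hle : Submodule.span ℝ (Set.range P) ≤
      (kroneckerSpan V P).comap (kroneckerBilinear (R := ℝ) X) := by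
    rw [Submodule.span_le]
    rintro _ ⟨j, rfl⟩
    exact kronecker_mem_kroneckerSpan hX j
  exact hle hc

variable [Fintype n] [DecidableEq n] [Fintype m] [DecidableEq m]

lemma lie_kronecker_kronecker_of_commute (X Y : Matrix n n ℂ) {C D : Matrix m m ℂ}
    (h : Commute C D) : ⁅X ⊗ₖ C, Y ⊗ₖ D⁆ = ⁅X, Y⁆ ⊗ₖ (C * D) := by
  rw [Ring.lie_def, ← mul_kronecker_mul, ← mul_kronecker_mul, h.eq, Ring.lie_def]
  ext
  simp [sub_mul]

lemma lie_kronecker_kronecker_of_orthogonalIdempotents [DecidableEq ι] {P : ι → Matrix m m ℂ}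
    (hP : OrthogonalIdempotents P) (X Y : Matrix n n ℂ) (j l : ι) :
    ⁅X ⊗ₖ P j, Y ⊗ₖ P l⁆ = if j = l then ⁅X, Y⁆ ⊗ₖ P j else 0 := by
  rcases eq_or_ne j l with rfl | hjl
  · rw [if_pos rfl, lie_kronecker_kronecker_of_commute X Y (Commute.refl _), (hP.idem j).eq]
  · have hcomm : Commute (P j) (P l) := by
      rw [Commute, SemiconjBy, hP.ortho hjl, hP.ortho hjl.symm]
    rw [if_neg hjl, lie_kronecker_kronecker_of_commute X Y hcomm, hP.ortho hjl, kronecker_zero]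

noncomputable def kroneckerLieHom (P : Matrix m m ℂ) (hP : IsIdempotentElem P) :
    Matrix n n ℂ →ₗ⁅ℝ⁆ Matrix (n × m) (n × m) ℂ :=
  { kroneckerRight P with
    map_lie' := fun {X Y} => by
      change ⁅X, Y⁆ ⊗ₖ P = ⁅X ⊗ₖ P, Y ⊗ₖ P⁆
      rw [lie_kronecker_kronecker_of_commute X Y (Commute.refl P), hP.eq] }

variable {V : Submodule ℝ (Matrix n n ℂ)} {P : ι → Matrix m m ℂ}

lemma lie_mem_kroneckerSpan [DecidableEq ι] (hP : OrthogonalIdempotents P)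
    {W U : Submodule ℝ (Matrix n n ℂ)} (h : ∀ X ∈ V, ∀ Y ∈ W, ⁅X, Y⁆ ∈ U)
    {u v : Matrix (n × m) (n × m) ℂ} (hu : u ∈ kroneckerSpan V P) (hv : v ∈ kroneckerSpan W P) :
    ⁅u, v⁆ ∈ kroneckerSpan U P := by
  refine lie_mem_of_mem_span ?_ hu hv
  rintro _ ⟨X, hX, j, rfl⟩ _ ⟨Y, hY, l, rfl⟩
  rw [lie_kronecker_kronecker_of_orthogonalIdempotents hP]
  split_ifs
  · exact kronecker_mem_kroneckerSpan (h X hX Y hY) j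
  · exact Submodule.zero_mem _

lemma DLA_le_kroneckerSpan [DecidableEq ι] (hP : OrthogonalIdempotents P)
    {g : LieSubalgebra ℝ (Matrix n n ℂ)} {S : Set (Matrix (n × m) (n × m) ℂ)}
    (hS : S ⊆ kroneckerSpan g.toSubmodule P) :
    (DLA S).toSubmodule ≤ kroneckerSpan g.toSubmodule P := by
  intro x hx
  induction hx using LieSubalgebra.lieSpan_induction with
  | mem x hx => exact hS hx
  | zero => exact Submodule.zero_mem _
  | add x y _ _ hx hy => exact Submodule.add_mem _ hx hy
  | smul c x _ hx => exact Submodule.smul_mem _ c hx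
  | lie x y _ _ hx hy => exact lie_mem_kroneckerSpan hP (fun X hX Y hY => g.lie_mem hX hY) hx hy

end Kronecker

section PerfectKronecker

open Polynomial

variable {n m : Type*} [Fintype n] [DecidableEq n] [Fintype m] [DecidableEq m]
  {k : LieSubalgebra ℝ (Matrix n n ℂ)} {H : LieSubalgebra ℝ (Matrix (n × m) (n × m) ℂ)}

lemma kronecker_pow_mem (hk : k.toSubmodule ≤ commSub k) {c : Matrix m m ℂ}
    (h1 : ∀ X ∈ k, X ⊗ₖ (1 : Matrix m m ℂ) ∈ H) (hc : ∀ X ∈ k, X ⊗ₖ c ∈ H) (p : ℕ)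
    {X : Matrix n n ℂ} (hX : X ∈ k) : X ⊗ₖ (c ^ p) ∈ H := by
  induction p generalizing X with
  | zero => simpa using h1 X hX
  | succ p ih =>
    have hle : commSub k ≤ H.toSubmodule.comap (kroneckerRight (c ^ (p + 1))) :=
      commSub_le_iff.2 fun u hu v hv => by
        change ⁅u, v⁆ ⊗ₖ (c ^ (p + 1)) ∈ H
        rw [pow_succ, ← lie_kronecker_kronecker_of_commute u v ((Commute.refl c).pow_left p)]
        exact H.lie_mem (ih hu) (hc v hv)
    exact hle (hk hX)

lemma kronecker_aeval_mem (hk : k.toSubmodule ≤ commSub k) {c : Matrix m m ℂ}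
    (h1 : ∀ X ∈ k, X ⊗ₖ (1 : Matrix m m ℂ) ∈ H) (hc : ∀ X ∈ k, X ⊗ₖ c ∈ H) (q : ℝ[X])
    {X : Matrix n n ℂ} (hX : X ∈ k) : X ⊗ₖ aeval c q ∈ H := by
  induction q using Polynomial.induction_on' with
  | add p q hp hq => rw [map_add, kronecker_add]; exact H.add_mem hp hq
  | monomial p a =>
    rw [aeval_monomial, ← Algebra.smul_def, kronecker_smul]
    exact H.smul_mem a (kronecker_pow_mem hk h1 hc p hX)

lemma kronecker_mem_commSub_of_isIdempotentElem (hk : k.toSubmodule ≤ commSub k)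
    {P : Matrix m m ℂ} (hP : IsIdempotentElem P) (h : ∀ X ∈ k, X ⊗ₖ P ∈ H)
    {X : Matrix n n ℂ} (hX : X ∈ k) : X ⊗ₖ P ∈ commSub H := by
  have hle : commSub k ≤ (commSub H).comap (kroneckerRight P) :=
    commSub_le_iff.2 fun u hu v hv => by
      change kroneckerLieHom P hP ⁅u, v⁆ ∈ commSub H
      rw [LieHom.map_lie]
      exact lie_mem_commSub (h u hu) (h v hv)
  exact hle (hk hX)

end PerfectKronecker

section Spectral

open Polynomial

variable {ι : Type*} [Fintype ι] [DecidableEq ι] {A : Type*} [Ring A] [Algebra ℝ A]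

lemma AlgHom.completeOrthogonalIdempotents_single (ψ : (ι → ℝ) →ₐ[ℝ] A) :
    CompleteOrthogonalIdempotents fun j => ψ (Pi.single j 1) :=
  (CompleteOrthogonalIdempotents.single fun _ => ℝ).map ψ.toRingHom

lemma AlgHom.apply_mem_span_range_single (ψ : (ι → ℝ) →ₐ[ℝ] A) (x : ι → ℝ) :
    ψ x ∈ Submodule.span ℝ (Set.range fun j => ψ (Pi.single j 1)) := by
  rw [pi_eq_sum_univ' x, map_sum]
  exact Submodule.sum_mem _ fun j _ =>
    (map_smul ψ (x j) _).symm ▸ Submodule.smul_mem _ _ (Submodule.subset_span ⟨j, rfl⟩)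

lemma AlgHom.single_eq_aeval_lagrangeBasis (ψ : (ι → ℝ) →ₐ[ℝ] A) {x : ι → ℝ}
    (hx : Function.Injective x) (j : ι) :
    ψ (Pi.single j 1) = aeval (ψ x) (Lagrange.basis Finset.univ x j) := by
  rw [aeval_algHom_apply, aeval_pi_apply]
  congr 1
  funext l
  rw [coe_aeval_eq_eval]
  rcases eq_or_ne j l with rfl | hjl
  · rw [Pi.single_eq_same, Lagrange.eval_basis_self hx.injOn (Finset.mem_univ j)]
  · rw [Pi.single_eq_of_ne' hjl, Lagrange.eval_basis_of_ne hjl (Finset.mem_univ l)]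

end Spectral

lemma Function.exists_fin_ncard_range_factorization {α β : Type*} [Finite α] (f : α → β) :
    ∃ (e : α → Fin (Set.range f).ncard) (lam : Fin (Set.range f).ncard → β),
      Function.Surjective e ∧ Function.Injective lam ∧ lam ∘ e = f := by
  have : Finite (Set.range f) := Set.finite_range f
  let φ : Set.range f ≃ Fin (Set.range f).ncard :=
    Finite.equivFinOfCardEq (Nat.card_coe_set_eq _)
  exact ⟨φ ∘ Set.rangeFactorization f, Subtype.val ∘ φ.symm,
    φ.surjective.comp Set.rangeFactorization_surjective,
    Subtype.val_injective.comp φ.symm.injective, by ext; simp⟩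

namespace Matrix.IsHermitian

variable {m : Type*} [Fintype m] [DecidableEq m] {χ : Matrix m m ℂ}

lemma exists_injective_algHom_apply_eq (hχ : χ.IsHermitian) :
    ∃ (ψ : (Fin (spectrum ℂ χ).ncard → ℝ) →ₐ[ℝ] Matrix m m ℂ)
      (lam : Fin (spectrum ℂ χ).ncard → ℝ),
      Function.Injective ψ ∧ Function.Injective lam ∧ ψ lam = χ := by
  have hcard : (spectrum ℂ χ).ncard = (Set.range hχ.eigenvalues).ncard := by
    rw [hχ.spectrum_eq_image_range, Set.ncard_image_of_injective _ RCLike.ofReal_injective]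
  rw [hcard]
  obtain ⟨e, lam, he, hlam, hev⟩ := Function.exists_fin_ncard_range_factorization hχ.eigenvalues
  let toDiag : (Fin (Set.range hχ.eigenvalues).ncard → ℝ) →ₐ[ℝ] (m → ℂ) :=
    AlgHom.pi fun i => (Complex.ofRealAm).comp (Pi.evalAlgHom ℝ _ (e i))
  have htoDiag : Function.Injective toDiag := by
    intro x y hxy
    refine he.injective_comp_right (funext fun i => ?_)
    exact Complex.ofReal_injective (congrFun hxy i)
  refine ⟨(Unitary.conjStarAlgAut ℝ _ hχ.eigenvectorUnitary).toAlgEquiv.toAlgHom.comp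
      ((diagonalAlgHom ℝ).comp toDiag), lam, ?_, hlam, ?_⟩
  · exact (Unitary.conjStarAlgAut ℝ _ _).injective.comp (diagonal_injective.comp htoDiag)
  · conv_rhs => rw [hχ.spectral_theorem, ← hev]
    rfl

end Matrix.IsHermitian

section Assembly

open Polynomial

variable {n m ι : Type*} [Fintype n] [DecidableEq n] [Fintype m] [DecidableEq m]

/-- The generating set `𝒜_i`. -/
def kroneckerGenSet (A : Fin 2 → Matrix n n ℂ) (χ : Matrix m m ℂ) (i : Fin 2) :
    Set (Matrix (n × m) (n × m) ℂ) :=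
  (Set.range fun j => A j ⊗ₖ (1 : Matrix m m ℂ)) ∪ {A i ⊗ₖ χ}

variable (A : Fin 2 → Matrix n n ℂ) (χ : Matrix m m ℂ) (i : Fin 2)

lemma kronecker_one_mem_DLA_kroneckerGenSet {X : Matrix n n ℂ} (hX : X ∈ DLA (Set.range A)) :
    X ⊗ₖ (1 : Matrix m m ℂ) ∈ DLA (kroneckerGenSet A χ i) := by
  have hle : DLA (Set.range A) ≤
      (DLA (kroneckerGenSet A χ i)).comap (kroneckerLieHom (1 : Matrix m m ℂ) .one) := by
    refine LieSubalgebra.lieSpan_le.2 ?_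
    rintro _ ⟨l, rfl⟩
    exact LieSubalgebra.subset_lieSpan (Or.inl ⟨l, rfl⟩)
  exact hle hX

/-- `J = {Y ∈ g | Y ⊗ χ ∈ H}` contains `A_i` and is `ad g`-stable, so it contains `[g, g]`. -/
lemma kronecker_mem_DLA_kroneckerGenSet {X : Matrix n n ℂ}
    (hX : X ∈ commSub (DLA (Set.range A))) : X ⊗ₖ χ ∈ DLA (kroneckerGenSet A χ i) := by
  set g := DLA (Set.range A)
  set H := DLA (kroneckerGenSet A χ i)
  set J := g.toSubmodule ⊓ H.toSubmodule.comap (kroneckerRight χ)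
  obtain ⟨i', hi'⟩ : ∃ i' : Fin 2, ∀ l, l = i' ∨ l = i := ⟨1 - i, by fin_cases i <;> decide⟩
  have hAg : ∀ l, A l ∈ g := fun l => LieSubalgebra.subset_lieSpan ⟨l, rfl⟩
  have hAiJ : A i ∈ J := ⟨hAg i, LieSubalgebra.subset_lieSpan (Or.inr rfl)⟩
  have hJad : ∀ x ∈ g, ∀ y ∈ J, ⁅x, y⁆ ∈ J := by
    rintro x hx y ⟨hyg, hyH⟩
    refine ⟨g.lie_mem hx hyg, ?_⟩
    change ⁅x, y⁆ ⊗ₖ χ ∈ H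
    rw [← one_mul χ, ← lie_kronecker_kronecker_of_commute x y (Commute.one_left χ)]
    exact H.lie_mem (kronecker_one_mem_DLA_kroneckerGenSet A χ i hx) hyH
  refine (commSub_DLA_le (S := Set.range A) (a := A i') ⟨i', rfl⟩ ?_ inf_le_left hJad hX).2
  rintro _ ⟨l, rfl⟩
  rcases hi' l with rfl | rfl
  · exact Or.inl rfl
  · exact Or.inr hAiJ

theorem commSub_DLA_kroneckerGenSet [Fintype ι] [DecidableEq ι] (hA : ∀ l, (A l)ᴴ = -(A l))
    {P : ι → Matrix m m ℂ} (hP : CompleteOrthogonalIdempotents P)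
    (hχP : χ ∈ Submodule.span ℝ (Set.range P)) (hPχ : ∀ j, ∃ q : ℝ[X], P j = aeval χ q) :
    commSub (DLA (kroneckerGenSet A χ i)) = kroneckerSpan (commSub (DLA (Set.range A))) P := by
  set g := DLA (Set.range A)
  set H := DLA (kroneckerGenSet A χ i)
  have hg : ∀ X ∈ g, Xᴴ = -X := fun X =>
    conjTranspose_eq_neg_of_mem_DLA (by rintro _ ⟨l, rfl⟩; exact hA l)
  have hperfect : (commSubAlg g).toSubmodule ≤ commSub (commSubAlg g) :=
    (commSub_commSubAlg hg).ge
  have hone : ∀ X ∈ commSubAlg g, X ⊗ₖ (1 : Matrix m m ℂ) ∈ H := fun X hX =>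
    kronecker_one_mem_DLA_kroneckerGenSet A χ i (commSub_le g hX)
  have hP_H : ∀ j, ∀ X ∈ commSubAlg g, X ⊗ₖ P j ∈ H := fun j X hX => by
    obtain ⟨q, hq⟩ := hPχ j
    rw [hq]
    exact kronecker_aeval_mem hperfect hone
      (fun Y hY => kronecker_mem_DLA_kroneckerGenSet A χ i hY) q hX
  have hH : H.toSubmodule ≤ kroneckerSpan g.toSubmodule P := by
    have hone_span : (1 : Matrix m m ℂ) ∈ Submodule.span ℝ (Set.range P) := by
      rw [← hP.complete]
      exact Submodule.sum_mem _ fun j _ => Submodule.subset_span ⟨j, rfl⟩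
    refine DLA_le_kroneckerSpan hP.toOrthogonalIdempotents ?_
    rintro _ (⟨l, rfl⟩ | rfl)
    · exact kronecker_mem_kroneckerSpan_of_mem_span (LieSubalgebra.subset_lieSpan ⟨l, rfl⟩)
        hone_span
    · exact kronecker_mem_kroneckerSpan_of_mem_span (LieSubalgebra.subset_lieSpan ⟨i, rfl⟩) hχP
  refine le_antisymm (commSub_le_iff.2 fun u hu v hv => ?_) (Submodule.span_le.2 ?_)
  · exact lie_mem_kroneckerSpan hP.toOrthogonalIdempotents
      (fun X hX Y hY => lie_mem_commSub hX hY) (hH hu) (hH hv)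
  · rintro _ ⟨X, hX, j, rfl⟩
    exact kronecker_mem_commSub_of_isIdempotentElem hperfect (hP.idem j) (hP_H j) hX

end Assembly

section KroneckerSum

variable {n m ι : Type*} [Fintype n] [DecidableEq n] [Fintype m] [DecidableEq m]
  {P : ι → Matrix m m ℂ}

lemma eq_zero_of_sum_kronecker_eq_zero [Fintype ι] (hP : OrthogonalIdempotents P)
    (hP0 : ∀ j, P j ≠ 0) {Z : ι → Matrix n n ℂ} (h : ∑ j, Z j ⊗ₖ P j = 0) (j : ι) : Z j = 0 := by
  have hproj : (1 ⊗ₖ P j) * ∑ l, Z l ⊗ₖ P l = Z j ⊗ₖ P j := by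
    rw [Finset.mul_sum, Finset.sum_eq_single j]
    · rw [← mul_kronecker_mul, one_mul, (hP.idem j).eq]
    · intro l _ hl
      rw [← mul_kronecker_mul, hP.ortho hl.symm, kronecker_zero]
    · simp
  rw [h, mul_zero] at hproj
  obtain ⟨p, q, hpq⟩ : ∃ p q, P j p q ≠ 0 := by
    by_contra! hc
    exact hP0 j (Matrix.ext hc)
  ext a b
  simpa [hpq] using congr_fun (congr_fun hproj.symm (a, p)) (b, q)

variable [DecidableEq ι] (k : LieSubalgebra ℝ (Matrix n n ℂ)) (hP : OrthogonalIdempotents P)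

noncomputable def kroneckerSumLieHom : (⨁ _ : ι, k) →ₗ⁅ℝ⁆ Matrix (n × m) (n × m) ℂ :=
  DirectSum.toLieAlgebra _ (fun j => (kroneckerLieHom (P j) (hP.idem j)).comp k.incl)
    (by
      intro j l hjl x y
      change ⁅(x : Matrix n n ℂ) ⊗ₖ P j, (y : Matrix n n ℂ) ⊗ₖ P l⁆ = 0
      rw [lie_kronecker_kronecker_of_orthogonalIdempotents hP, if_neg hjl])

lemma kroneckerSumLieHom_of (j : ι) (y : k) :
    kroneckerSumLieHom k hP (DirectSum.of _ j y) = (y : Matrix n n ℂ) ⊗ₖ P j :=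
  DirectSum.toModule_lof (M := fun _ : ι => k) ℝ j y

variable [Fintype ι]

lemma kroneckerSumLieHom_apply (x : ⨁ _ : ι, k) :
    kroneckerSumLieHom k hP x = ∑ j, (x j : Matrix n n ℂ) ⊗ₖ P j := by
  conv_lhs => rw [← DirectSum.sum_univ_of x]
  simp only [map_sum, kroneckerSumLieHom_of]

lemma kroneckerSumLieHom_injective (hP0 : ∀ j, P j ≠ 0) :
    Function.Injective (kroneckerSumLieHom k hP) := by
  refine (injective_iff_map_eq_zero _).2 fun x hx => ?_
  rw [kroneckerSumLieHom_apply] at hx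
  exact DFinsupp.ext fun j => Subtype.ext (eq_zero_of_sum_kronecker_eq_zero hP hP0 hx j)

lemma range_kroneckerSumLieHom :
    (kroneckerSumLieHom k hP).range.toSubmodule = kroneckerSpan k.toSubmodule P := by
  refine le_antisymm ?_ (Submodule.span_le.2 ?_)
  · rintro _ ⟨x, rfl⟩
    change kroneckerSumLieHom k hP x ∈ _
    rw [kroneckerSumLieHom_apply]
    exact Submodule.sum_mem _ fun j _ => kronecker_mem_kroneckerSpan (x j).2 j
  · rintro _ ⟨X, hX, j, rfl⟩
    exact ⟨DirectSum.of _ j ⟨X, hX⟩, kroneckerSumLieHom_of k hP j ⟨X, hX⟩⟩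

end KroneckerSum

/-- For a two-element dynamical generating set `𝒜 = {A₁, A₂}` and Hermitian `χ` with
exactly `K` distinct eigenvalues, for each `i ∈ {1,2}` the commutator subalgebra of the
DLA generated by `𝒜_i = {A₁ ⊗ I_M, A₂ ⊗ I_M, A_i ⊗ χ}` is isomorphic, as a real Lie
algebra, to the direct sum of `K` copies of `[g_𝒜, g_𝒜]`. -/
theorem stmt14 {N M K : ℕ} (A : Fin 2 → Matrix (Fin N) (Fin N) ℂ)
    (hA : IsDynGenSet A)
    (χ : Matrix (Fin M) (Fin M) ℂ) (hχ : χ.IsHermitian)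
    (hK : (spectrum ℂ χ).ncard = K) :
    ∀ i : Fin 2,
      ∃ (h : LieSubalgebra ℝ (Matrix (Fin N × Fin M) (Fin N × Fin M) ℂ))
        (h0 : LieSubalgebra ℝ (Matrix (Fin N) (Fin N) ℂ)),
        h.toSubmodule =
          commSub (DLA ((Set.range fun j => A j ⊗ₖ (1 : Matrix (Fin M) (Fin M) ℂ)) ∪
            {A i ⊗ₖ χ})) ∧
        h0.toSubmodule = commSub (DLA (Set.range A)) ∧
        Nonempty (↥h ≃ₗ⁅ℝ⁆ (⨁ _ : Fin K, ↥h0)) := by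
  intro i
  obtain ⟨ψ, lam, hψ, hlam, hψχ⟩ := hχ.exists_injective_algHom_apply_eq
  subst hK
  set P := fun j => ψ (Pi.single j 1)
  have hP : CompleteOrthogonalIdempotents P := ψ.completeOrthogonalIdempotents_single
  have hP0 : ∀ j, P j ≠ 0 := fun j =>
    (map_ne_zero_iff ψ hψ).2 (Pi.single_ne_zero_iff.2 one_ne_zero)
  have hχP : χ ∈ Submodule.span ℝ (Set.range P) := by
    simpa only [hψχ] using ψ.apply_mem_span_range_single lam
  have hPχ : ∀ j, ∃ q : Polynomial ℝ, P j = Polynomial.aeval χ q := fun j =>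
    ⟨_, by simpa only [hψχ] using ψ.single_eq_aeval_lagrangeBasis hlam j⟩
  let Ψ := kroneckerSumLieHom (commSubAlg (DLA (Set.range A))) hP.toOrthogonalIdempotents
  refine ⟨Ψ.range, commSubAlg _, ?_, rfl,
    ⟨(LieEquiv.ofInjective Ψ (kroneckerSumLieHom_injective _ _ hP0)).symm⟩⟩
  rw [range_kroneckerSumLieHom]
  exact (commSub_DLA_kroneckerGenSet A χ i hA.2.2.2 hP hχP hPχ).symm
end

section
/- Let G be a simple graph on vertex set [n] with edge set E, and define the 2ⁿ×2ⁿ complex matrices A₁ = Σ_{j=1}^{n} i·X_j and A₂ = Σ_{(j,k)∈E} i·Z_jZ_k. Then there exists a nonzero real number c such that [A₁, [A₁, [A₁, A₂]]] = c·[A₁, A₂] (in fact this holds with c = −16); hence the pair (A₂, A₁) admits a stable extension of length 2, and the QAOA-MaxCut generating set 𝓜_G = {A₁, A₂} is cyclic with common cycle length 2. -/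
/-!
Write `s = X_j + X_k`. The other `X_i` commute with `s` and with `Z_jZ_k`, while `s`
anticommutes with `Z_jZ_k`; hence bracketing with `Σ X_i` multiplies `s ^ t Z_jZ_k` by `2s`, and
`⁅Σ X_i, ·⁆³` sends `Z_jZ_k` to `8 s³ Z_jZ_k`. Since `X_j, X_k` are commuting involutions,
`s³ = 4s`, so this is `16 ⁅Σ X_i, Z_jZ_k⁆`. Summing over the edges and collecting the four
factors `i` on the left and two on the right turns `16` into `-16`.
-/

open scoped Matrix

/-- The Pauli matrix `X`. -/
noncomputable def pauliX : Matrix (Fin 2) (Fin 2) ℂ := !![0, 1; 1, 0]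

/-- The Pauli matrix `Z`. -/
noncomputable def pauliZ : Matrix (Fin 2) (Fin 2) ℂ := !![1, 0; 0, -1]

/-- The `n`-qubit operator (a `2ⁿ×2ⁿ` matrix, indexed by `Fin n → Fin 2`) given as the
`n`-fold Kronecker product of the single-qubit operators `P 0, …, P (n-1)`. -/
noncomputable def nFoldKron {n : ℕ} (P : Fin n → Matrix (Fin 2) (Fin 2) ℂ) :
    Matrix (Fin n → Fin 2) (Fin n → Fin 2) ℂ :=
  Matrix.of fun f g => ∏ i, P i (f i) (g i)

/-- `X_j`: Pauli `X` on the `j`-th factor, identity elsewhere. -/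
noncomputable def qubitX (n : ℕ) (j : Fin n) :
    Matrix (Fin n → Fin 2) (Fin n → Fin 2) ℂ :=
  nFoldKron fun i => if i = j then pauliX else 1

/-- `Z_jZ_k`: Pauli `Z` on the `j`-th and `k`-th factors, identity elsewhere. -/
noncomputable def qubitZZ (n : ℕ) (j k : Fin n) :
    Matrix (Fin n → Fin 2) (Fin n → Fin 2) ℂ :=
  nFoldKron fun i => if i = j ∨ i = k then pauliZ else 1

/-- `A₁ = Σ_j i·X_j`. -/
noncomputable def qaoaA1 (n : ℕ) : Matrix (Fin n → Fin 2) (Fin n → Fin 2) ℂ :=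
  ∑ j, Complex.I • qubitX n j

/-- `A₂ = Σ_{(j,k)∈E} i·Z_jZ_k`, each edge of `G` counted once. -/
noncomputable def qaoaA2 (n : ℕ) (G : SimpleGraph (Fin n)) [DecidableRel G.Adj] :
    Matrix (Fin n → Fin 2) (Fin n → Fin 2) ℂ :=
  ∑ p ∈ Finset.univ.filter (fun p : Fin n × Fin n => G.Adj p.1 p.2 ∧ p.1 < p.2),
    Complex.I • qubitZZ n p.1 p.2

section

-- Local only: globally they would change how the brackets in `stmt17` elaborate.
attribute [local instance] LieRing.ofAssociativeRing LieAlgebra.ofAssociativeAlgebra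

section AnticommutingGenerators

variable {R : Type*} [Ring R]

theorem add_pow_three_of_mul_self_eq_one {x y : R} (hx : x * x = 1) (hy : y * y = 1)
    (hxy : Commute x y) : (x + y) ^ 3 = 4 • (x + y) := by
  have hsq : (x + y) ^ 2 = 2 • (1 + x * y) := by
    rw [sq, add_mul, mul_add, mul_add, hx, hy, ← hxy.eq]; abel
  have hyxy : y * (x * y) = x := by rw [← mul_assoc, ← hxy.eq, mul_assoc, hy, mul_one]
  rw [pow_succ', hsq, mul_smul_comm, add_mul, mul_add, mul_add, mul_one, mul_one, ← mul_assoc, hx,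
    one_mul, hyxy]
  abel

variable {s r m : R}

theorem lie_add_pow_mul_of_anticommute (hsr : Commute s r) (hrm : Commute r m)
    (hsm : s * m = -(m * s)) (t : ℕ) : ⁅s + r, s ^ t * m⁆ = 2 • (s ^ (t + 1) * m) := by
  have hms : s ^ t * m * s = -(s ^ (t + 1) * m) := by
    rw [mul_assoc, ← neg_neg (m * s), ← hsm, mul_neg, ← mul_assoc, ← pow_succ]
  have hr : Commute r (s ^ t * m) := (hsr.pow_left t).symm.mul_right hrm
  rw [Ring.lie_def, add_mul, mul_add, hms, ← hr.eq, ← mul_assoc, ← pow_succ']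
  abel

theorem lie_lie_lie_of_anticommute (hsr : Commute s r) (hrm : Commute r m)
    (hsm : s * m = -(m * s)) (hs : s ^ 3 = 4 • s) :
    ⁅s + r, ⁅s + r, ⁅s + r, m⁆⁆⁆ = 16 • ⁅s + r, m⁆ := by
  have h := lie_add_pow_mul_of_anticommute hsr hrm hsm
  have h0 : ⁅s + r, m⁆ = 2 • (s ^ 1 * m) := by simpa using h 0
  rw [h0, lie_nsmul, h, lie_nsmul, lie_nsmul, h, hs]
  simp only [smul_mul_assoc, smul_smul, pow_one]
  norm_num

end AnticommutingGenerators

theorem pauliX_mul_self : pauliX * pauliX = 1 := by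
  simp [pauliX, Matrix.one_fin_two]

theorem pauliX_mul_pauliZ : pauliX * pauliZ = -(pauliZ * pauliX) := by
  simp [pauliX, pauliZ]

namespace nFoldKron

variable {n : ℕ} {P Q : Fin n → Matrix (Fin 2) (Fin 2) ℂ}

theorem one : nFoldKron (fun _ => 1 : Fin n → Matrix (Fin 2) (Fin 2) ℂ) = 1 := by
  ext f g
  simp only [nFoldKron, Matrix.of_apply, Matrix.one_apply, Finset.prod_boole, funext_iff,
    Finset.mem_univ, true_imp_iff]

theorem mul (P Q : Fin n → Matrix (Fin 2) (Fin 2) ℂ) :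
    nFoldKron P * nFoldKron Q = nFoldKron fun i => P i * Q i := by
  ext f g
  simp only [nFoldKron, Matrix.mul_apply, Matrix.of_apply]
  rw [Finset.prod_univ_sum (fun _ => Finset.univ) (fun i a => P i (f i) a * Q i a (g i)),
    Fintype.piFinset_univ]
  exact Finset.sum_congr rfl fun x _ => Finset.prod_mul_distrib.symm

theorem commute (h : ∀ i, Commute (P i) (Q i)) : Commute (nFoldKron P) (nFoldKron Q) := by
  rw [Commute, SemiconjBy, mul, mul]
  exact congrArg nFoldKron (funext fun i => (h i).eq)

theorem mul_eq_neg_mul (j : Fin n) (hj : P j * Q j = -(Q j * P j))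
    (h : ∀ i ≠ j, Commute (P i) (Q i)) :
    nFoldKron P * nFoldKron Q = -(nFoldKron Q * nFoldKron P) := by
  rw [mul, mul]
  ext f g
  simp only [nFoldKron, Matrix.neg_apply, Matrix.of_apply]
  rw [← Finset.mul_prod_erase _ _ (Finset.mem_univ j),
    ← Finset.mul_prod_erase _ _ (Finset.mem_univ j), hj, Matrix.neg_apply, neg_mul,
    Finset.prod_congr rfl fun i hi => by rw [(h i (Finset.ne_of_mem_erase hi)).eq]]

end nFoldKron

variable {n : ℕ}

theorem qubitX_mul_self (j : Fin n) : qubitX n j * qubitX n j = 1 := by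
  rw [qubitX, nFoldKron.mul, ← nFoldKron.one]
  refine congrArg nFoldKron (funext fun i => ?_)
  split_ifs
  exacts [pauliX_mul_self, one_mul 1]

theorem commute_qubitX (j k : Fin n) : Commute (qubitX n j) (qubitX n k) :=
  nFoldKron.commute fun i => by split_ifs <;> simp

theorem commute_qubitX_qubitZZ {i j k : Fin n} (hij : i ≠ j) (hik : i ≠ k) :
    Commute (qubitX n i) (qubitZZ n j k) :=
  nFoldKron.commute fun l => by split_ifs <;> simp_all

theorem qubitX_mul_qubitZZ_left (j k : Fin n) :
    qubitX n j * qubitZZ n j k = -(qubitZZ n j k * qubitX n j) :=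
  nFoldKron.mul_eq_neg_mul j (by simp [pauliX_mul_pauliZ]) fun i hi => by
    split_ifs <;> simp_all

theorem qubitZZ_comm (j k : Fin n) : qubitZZ n j k = qubitZZ n k j := by
  simp only [qubitZZ, or_comm]

theorem qubitX_mul_qubitZZ_right (j k : Fin n) :
    qubitX n k * qubitZZ n j k = -(qubitZZ n j k * qubitX n k) := by
  rw [qubitZZ_comm]; exact qubitX_mul_qubitZZ_left k j

theorem sum_qubitX_lie_lie_lie_qubitZZ {j k : Fin n} (hjk : j ≠ k) :
    ⁅∑ i, qubitX n i, ⁅∑ i, qubitX n i, ⁅∑ i, qubitX n i, qubitZZ n j k⁆⁆⁆ =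
      16 • ⁅∑ i, qubitX n i, qubitZZ n j k⁆ := by
  have hsplit : ∑ i, qubitX n i =
      (qubitX n j + qubitX n k) + ∑ i ∈ Finset.univ \ {j, k}, qubitX n i := by
    rw [← Finset.sum_pair hjk, add_comm, Finset.sum_sdiff (Finset.subset_univ _)]
  rw [hsplit]
  refine lie_lie_lie_of_anticommute ?_ ?_ ?_
    (add_pow_three_of_mul_self_eq_one (qubitX_mul_self j) (qubitX_mul_self k)
      (commute_qubitX j k))
  · exact Commute.sum_right _ _ _ fun i _ => (commute_qubitX j i).add_left (commute_qubitX k i)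
  · refine Commute.sum_left _ _ _ fun i hi => ?_
    simp only [Finset.mem_sdiff, Finset.mem_univ, Finset.mem_insert, Finset.mem_singleton,
      not_or, true_and] at hi
    exact commute_qubitX_qubitZZ hi.1 hi.2
  · rw [add_mul, mul_add, qubitX_mul_qubitZZ_left, qubitX_mul_qubitZZ_right, neg_add]

theorem qaoaA1_lie_lie_lie_qaoaA2 (G : SimpleGraph (Fin n)) [DecidableRel G.Adj] :
    ⁅qaoaA1 n, ⁅qaoaA1 n, ⁅qaoaA1 n, qaoaA2 n G⁆⁆⁆ = (-16 : ℝ) • ⁅qaoaA1 n, qaoaA2 n G⁆ := by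
  rw [qaoaA1, qaoaA2, ← Finset.smul_sum, ← Finset.smul_sum, ← Complex.coe_smul]
  simp only [smul_lie, lie_smul, lie_sum, ← Finset.smul_sum]
  rw [Finset.sum_congr rfl fun p hp =>
    sum_qubitX_lie_lie_lie_qubitZZ (G.ne_of_adj (Finset.mem_filter.1 hp).2.1), ← Finset.smul_sum,
    ← Nat.cast_smul_eq_nsmul ℂ]
  simp only [smul_smul]
  congr 1
  push_cast
  linear_combination 16 * Complex.I ^ 2 * Complex.I_sq

theorem qaoaA1_lie_lie_lie_qaoaA2_swap (G : SimpleGraph (Fin n)) [DecidableRel G.Adj] :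
    ⁅qaoaA1 n, ⁅qaoaA1 n, ⁅qaoaA2 n G, qaoaA1 n⁆⁆⁆ = (-16 : ℝ) • ⁅qaoaA2 n G, qaoaA1 n⁆ := by
  rw [← lie_skew (qaoaA2 n G), lie_neg, lie_neg, qaoaA1_lie_lie_lie_qaoaA2, smul_neg]

end

/-- For the QAOA-MaxCut generators `A₁ = Σ i·X_j`, `A₂ = Σ_{(j,k)∈E} i·Z_jZ_k` of any
simple graph `G`, one has `⁅A₁,⁅A₁,⁅A₁,A₂⁆⁆⁆ = c • ⁅A₁,A₂⁆` for a nonzero real `c` (in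
fact `c = -16`); hence every noncommuting pair from `𝓜_G = {A₁, A₂}` admits a stable
extension of length `2`, i.e. `𝓜_G` is cyclic with common cycle length `2`. -/
theorem stmt17 (n : ℕ) (G : SimpleGraph (Fin n)) [DecidableRel G.Adj] :
    (∃ c : ℝ, c ≠ 0 ∧
      ⁅qaoaA1 n, ⁅qaoaA1 n, ⁅qaoaA1 n, qaoaA2 n G⁆⁆⁆ = c • ⁅qaoaA1 n, qaoaA2 n G⁆) ∧
    ⁅qaoaA1 n, ⁅qaoaA1 n, ⁅qaoaA1 n, qaoaA2 n G⁆⁆⁆ =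
      (-16 : ℝ) • ⁅qaoaA1 n, qaoaA2 n G⁆ ∧
    (∀ B ∈ ({qaoaA1 n, qaoaA2 n G} : Set (Matrix (Fin n → Fin 2) (Fin n → Fin 2) ℂ)),
      ∀ C ∈ ({qaoaA1 n, qaoaA2 n G} : Set (Matrix (Fin n → Fin 2) (Fin n → Fin 2) ℂ)),
        ⁅B, C⁆ ≠ 0 →
          ∃ k₁ ∈ ({qaoaA1 n, qaoaA2 n G} : Set (Matrix (Fin n → Fin 2) (Fin n → Fin 2) ℂ)),
            ∃ k₂ ∈ ({qaoaA1 n, qaoaA2 n G} : Set (Matrix (Fin n → Fin 2) (Fin n → Fin 2) ℂ)),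
              ∃ c : ℝ, c ≠ 0 ∧ ⁅k₂, ⁅k₁, ⁅B, C⁆⁆⁆ = c • ⁅B, C⁆) := by
  have h := qaoaA1_lie_lie_lie_qaoaA2 G
  have hself (M : Matrix (Fin n → Fin 2) (Fin n → Fin 2) ℂ) : ⁅M, M⁆ = 0 := by
    rw [Ring.lie_def, sub_self]
  have hA1 : qaoaA1 n ∈ ({qaoaA1 n, qaoaA2 n G} :
      Set (Matrix (Fin n → Fin 2) (Fin n → Fin 2) ℂ)) := Set.mem_insert _ _
  refine ⟨⟨-16, by norm_num, h⟩, h, ?_⟩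
  rintro B (rfl | rfl) C (rfl | rfl) hBC
  · exact absurd (hself _) hBC
  · exact ⟨_, hA1, _, hA1, -16, by norm_num, h⟩
  · exact ⟨_, hA1, _, hA1, -16, by norm_num, qaoaA1_lie_lie_lie_qaoaA2_swap G⟩
  · exact absurd (hself _) hBC
end

section
/- Let G be a simple graph on vertex set [n] with edge set E, and define the 2ⁿ×2ⁿ complex matrices A₁ = Σ_{j=1}^{n} i·X_j, A₂ = Σ_{j=1}^{n} i·Y_j, and A₃ = Σ_{(j,k)∈E} i·Z_jZ_k. Then there exist nonzero real numbers c₁, c₂, c₃ such that [A₁, [A₁, [A₁, A₃]]] = c₁·[A₁, A₃], [A₂, [A₂, [A₂, A₃]]] = c₂·[A₂, A₃], and [A₂, [A₂, [A₁, A₂]]] = c₃·[A₁, A₂]; hence the generating set 𝓢_G = {A₁, A₂, A₃} is cyclic with common cycle length 2. -/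
open scoped Matrix

noncomputable def pauliY : Matrix (Fin 2) (Fin 2) ℂ := !![0, -Complex.I; Complex.I, 0]

noncomputable def qubitY (n : ℕ) (j : Fin n) :
    Matrix (Fin n → Fin 2) (Fin n → Fin 2) ℂ :=
  nFoldKron fun i => if i = j then pauliY else 1

noncomputable def opA1 (n : ℕ) : Matrix (Fin n → Fin 2) (Fin n → Fin 2) ℂ :=
  ∑ j, Complex.I • qubitX n j

noncomputable def opA2 (n : ℕ) : Matrix (Fin n → Fin 2) (Fin n → Fin 2) ℂ :=
  ∑ j, Complex.I • qubitY n j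

/-- `A₃ = Σ_{(j,k)∈E} i·Z_jZ_k`, each edge of `G` counted once. -/
noncomputable def opA3 (n : ℕ) (G : SimpleGraph (Fin n)) [DecidableRel G.Adj] :
    Matrix (Fin n → Fin 2) (Fin n → Fin 2) ℂ :=
  ∑ p ∈ Finset.univ.filter (fun p : Fin n × Fin n => G.Adj p.1 p.2 ∧ p.1 < p.2),
    Complex.I • qubitZZ n p.1 p.2

/-!
Let `x = ∑ⱼ Pⱼ` with `P = iX` (this is `A₁`) or `P = iY` (this is `A₂`). Operators on different
qubits commute, so `ad x` acts on an operator `Mⱼ` on the `j`-th qubit as `ad P` does on `M`,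
and `(ad (iX))² = (ad (iY))² = -4` on `Z`. Since `ad x` is a derivation, `(ad x)² = c` on `a`
and `b` gives `(ad x)³ = 4c · ad x` on `a b`; with `c = -4` this holds for every edge term
`Zⱼ Zₖ`, hence for `A₃`. Likewise `⁅A₁, A₂⁆ = ∑ⱼ ⁅iX, iY⁆ⱼ` is a sum of multiples of `Zⱼ`, on
which `(ad A₂)² = -4`. Antisymmetry of the bracket handles the reversed pairs.
-/

section

attribute [local instance 100] LieRing.ofAssociativeRing

section Commutators

variable {K R : Type*} [CommRing K] [Ring R] [Algebra K R]

namespace Ring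

-- `_root_.lie_smul` does not rewrite the ring commutator `Ring.lie_def` of an algebra.
theorem lie_smul (c : K) (x y : R) : ⁅x, c • y⁆ = c • ⁅x, y⁆ := by
  simp only [lie_def, mul_smul_comm, smul_mul_assoc, smul_sub]

theorem lie_mul (x a b : R) : ⁅x, a * b⁆ = ⁅x, a⁆ * b + a * ⁅x, b⁆ := by
  simp only [lie_def]; noncomm_ring

end Ring

/-- `ad x` is a derivation, so `(ad x)³ (a b)` expands binomially; if `(ad x)² = c` on `a` and `b`,
every term is a multiple of `⁅x, a⁆ b` or `a ⁅x, b⁆`, with total weight `c + 3c = 4c`. -/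
theorem lie_lie_lie_mul_of_lie_lie {x a b : R} {c : K} (ha : ⁅x, ⁅x, a⁆⁆ = c • a)
    (hb : ⁅x, ⁅x, b⁆⁆ = c • b) : ⁅x, ⁅x, ⁅x, a * b⁆⁆⁆ = (4 * c) • ⁅x, a * b⁆ := by
  simp only [Ring.lie_mul, lie_add, ha, hb, Ring.lie_smul, smul_mul_assoc, mul_smul_comm]
  module

theorem lie_lie_lie_sum_smul {ι : Type*} {x : R} {c : K} (s : Finset ι) (r : ι → K) (f : ι → R)
    (h : ∀ i ∈ s, ⁅x, ⁅x, ⁅x, f i⁆⁆⁆ = c • ⁅x, f i⁆) :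
    ⁅x, ⁅x, ⁅x, ∑ i ∈ s, r i • f i⁆⁆⁆ = c • ⁅x, ∑ i ∈ s, r i • f i⁆ := by
  simp only [lie_sum, Ring.lie_smul, Finset.smul_sum]
  exact Finset.sum_congr rfl fun i hi => by rw [h i hi, smul_comm]

end Commutators

section Qubits

variable {n : ℕ}

theorem nFoldKron_mul (P Q : Fin n → Matrix (Fin 2) (Fin 2) ℂ) :
    nFoldKron P * nFoldKron Q = nFoldKron (P * Q) := by
  ext f g
  simp only [nFoldKron, Matrix.mul_apply, Matrix.of_apply, Pi.mul_apply, Fintype.prod_sum,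
    Finset.prod_mul_distrib]

theorem nFoldKron_one : nFoldKron (1 : Fin n → Matrix (Fin 2) (Fin 2) ℂ) = 1 := by
  ext f g
  simp only [nFoldKron, Matrix.of_apply, Pi.one_apply, Matrix.one_apply, Finset.prod_ite_zero,
    Finset.prod_const_one, Finset.mem_univ, true_implies, funext_iff]

theorem nFoldKron_mulSingle_apply (a : Fin n) (M : Matrix (Fin 2) (Fin 2) ℂ) (f g : Fin n → Fin 2) :
    nFoldKron (Pi.mulSingle a M) f g
      = M (f a) (g a) * ∏ i ∈ {a}ᶜ, (1 : Matrix (Fin 2) (Fin 2) ℂ) (f i) (g i) := by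
  rw [nFoldKron, Matrix.of_apply, Fintype.prod_eq_mul_prod_compl a, Pi.mulSingle_eq_same]
  congr 1
  exact Finset.prod_congr rfl fun i hi =>
    by rw [Pi.mulSingle_eq_of_ne (Finset.mem_compl.mp hi ∘ Finset.mem_singleton.mpr)]

noncomputable def onQubit (a : Fin n) :
    Matrix (Fin 2) (Fin 2) ℂ →ₐ[ℂ] Matrix (Fin n → Fin 2) (Fin n → Fin 2) ℂ :=
  AlgHom.ofLinearMap
    { toFun M := nFoldKron (Pi.mulSingle a M)
      map_add' M N := by
        ext f g
        simp only [Matrix.add_apply, nFoldKron_mulSingle_apply, add_mul]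
      map_smul' c M := by
        ext f g
        simp only [Matrix.smul_apply, nFoldKron_mulSingle_apply, smul_eq_mul, mul_assoc,
          RingHom.id_apply] }
    (by simp only [LinearMap.coe_mk, AddHom.coe_mk, Pi.mulSingle_one, nFoldKron_one])
    (fun M N => by simp only [LinearMap.coe_mk, AddHom.coe_mk, nFoldKron_mul, Pi.mulSingle_mul])

theorem onQubit_apply (a : Fin n) (M : Matrix (Fin 2) (Fin 2) ℂ) :
    onQubit a M = nFoldKron (Pi.mulSingle a M) := rfl

theorem commute_onQubit {a b : Fin n} (h : a ≠ b) (M N : Matrix (Fin 2) (Fin 2) ℂ) :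
    Commute (onQubit a M) (onQubit b N) := by
  simp only [Commute, SemiconjBy, onQubit_apply, nFoldKron_mul,
    (Pi.mulSingle_commute (f := fun _ : Fin n => Matrix (Fin 2) (Fin 2) ℂ) h M N).eq]

theorem onQubit_lie (a : Fin n) (P M : Matrix (Fin 2) (Fin 2) ℂ) :
    ⁅onQubit a P, onQubit a M⁆ = onQubit a ⁅P, M⁆ := by
  simp only [Ring.lie_def, map_sub, map_mul]

theorem sum_onQubit_lie (P : Matrix (Fin 2) (Fin 2) ℂ) (a : Fin n) (M : Matrix (Fin 2) (Fin 2) ℂ) :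
    ⁅∑ j : Fin n, onQubit j P, onQubit a M⁆ = onQubit a ⁅P, M⁆ := by
  rw [sum_lie, Finset.sum_eq_single a (fun j _ hj => (commute_onQubit hj P M).lie_eq)
    (fun ha => absurd (Finset.mem_univ a) ha), onQubit_lie]

theorem sum_onQubit_lie_lie {P M : Matrix (Fin 2) (Fin 2) ℂ} {c : ℂ} (h : ⁅P, ⁅P, M⁆⁆ = c • M)
    (a : Fin n) :
    ⁅∑ j : Fin n, onQubit j P, ⁅∑ j : Fin n, onQubit j P, onQubit a M⁆⁆ = c • onQubit a M := by
  rw [sum_onQubit_lie, sum_onQubit_lie, h, map_smul]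

theorem qubitX_eq_onQubit (j : Fin n) : qubitX n j = onQubit j pauliX := by
  rw [qubitX, onQubit_apply]
  congr 1
  ext1 i
  rw [Pi.mulSingle_apply]

theorem qubitY_eq_onQubit (j : Fin n) : qubitY n j = onQubit j pauliY := by
  rw [qubitY, onQubit_apply]
  congr 1
  ext1 i
  rw [Pi.mulSingle_apply]

theorem qubitZZ_eq_onQubit_mul {j k : Fin n} (h : j ≠ k) :
    qubitZZ n j k = onQubit j pauliZ * onQubit k pauliZ := by
  rw [onQubit_apply, onQubit_apply, nFoldKron_mul, qubitZZ]
  congr 1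
  ext1 i
  simp only [Pi.mul_apply, Pi.mulSingle_apply]
  split_ifs <;> simp_all

end Qubits

section Pauli

open Complex

theorem lie_lie_I_pauliX_pauliZ :
    ⁅I • pauliX, ⁅I • pauliX, pauliZ⁆⁆ = (-4 : ℂ) • pauliZ := by
  ext i j
  fin_cases i <;> fin_cases j <;> simp [Ring.lie_def, pauliX, pauliZ] <;> ring_nf <;> simp

theorem lie_lie_I_pauliY_pauliZ :
    ⁅I • pauliY, ⁅I • pauliY, pauliZ⁆⁆ = (-4 : ℂ) • pauliZ := by
  ext i j
  fin_cases i <;> fin_cases j <;> simp [Ring.lie_def, pauliY, pauliZ] <;> ring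

theorem lie_lie_I_pauliY_lie_I_pauliX_I_pauliY :
    ⁅I • pauliY, ⁅I • pauliY, ⁅I • pauliX, I • pauliY⁆⁆⁆ = (-4 : ℂ) • ⁅I • pauliX, I • pauliY⁆ := by
  ext i j
  fin_cases i <;> fin_cases j <;> simp [Ring.lie_def, pauliX, pauliY] <;> ring

end Pauli

section Generators

variable {n : ℕ}

theorem opA1_eq_sum_onQubit : opA1 n = ∑ j, onQubit j (Complex.I • pauliX) := by
  simp only [opA1, qubitX_eq_onQubit, map_smul]

theorem opA2_eq_sum_onQubit : opA2 n = ∑ j, onQubit j (Complex.I • pauliY) := by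
  simp only [opA2, qubitY_eq_onQubit, map_smul]

theorem sum_onQubit_lie_lie_lie_opA3 {P : Matrix (Fin 2) (Fin 2) ℂ}
    (hP : ⁅P, ⁅P, pauliZ⁆⁆ = (-4 : ℂ) • pauliZ) (G : SimpleGraph (Fin n)) [DecidableRel G.Adj] :
    ⁅∑ j : Fin n, onQubit j P, ⁅∑ j : Fin n, onQubit j P, ⁅∑ j : Fin n, onQubit j P, opA3 n G⁆⁆⁆
      = (-16 : ℂ) • ⁅∑ j : Fin n, onQubit j P, opA3 n G⁆ := by
  unfold opA3
  refine lie_lie_lie_sum_smul _ _ _ fun p hp => ?_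
  rw [qubitZZ_eq_onQubit_mul (Finset.mem_filter.mp hp).2.2.ne, show (-16 : ℂ) = 4 * -4 by norm_num]
  exact lie_lie_lie_mul_of_lie_lie (sum_onQubit_lie_lie hP p.1) (sum_onQubit_lie_lie hP p.2)

theorem opA1_lie_lie_lie_opA3 (G : SimpleGraph (Fin n)) [DecidableRel G.Adj] :
    ⁅opA1 n, ⁅opA1 n, ⁅opA1 n, opA3 n G⁆⁆⁆ = (-16 : ℝ) • ⁅opA1 n, opA3 n G⁆ := by
  rw [← Complex.coe_smul, opA1_eq_sum_onQubit]
  exact_mod_cast sum_onQubit_lie_lie_lie_opA3 lie_lie_I_pauliX_pauliZ G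

theorem opA2_lie_lie_lie_opA3 (G : SimpleGraph (Fin n)) [DecidableRel G.Adj] :
    ⁅opA2 n, ⁅opA2 n, ⁅opA2 n, opA3 n G⁆⁆⁆ = (-16 : ℝ) • ⁅opA2 n, opA3 n G⁆ := by
  rw [← Complex.coe_smul, opA2_eq_sum_onQubit]
  exact_mod_cast sum_onQubit_lie_lie_lie_opA3 lie_lie_I_pauliY_pauliZ G

theorem lie_opA1_opA2 :
    ⁅opA1 n, opA2 n⁆ = ∑ j, onQubit j ⁅Complex.I • pauliX, Complex.I • pauliY⁆ := by
  rw [opA2_eq_sum_onQubit, lie_sum, opA1_eq_sum_onQubit]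
  simp only [sum_onQubit_lie]

theorem opA2_lie_lie_lie_opA1_opA2 :
    ⁅opA2 n, ⁅opA2 n, ⁅opA1 n, opA2 n⁆⁆⁆ = (-4 : ℝ) • ⁅opA1 n, opA2 n⁆ := by
  rw [lie_opA1_opA2, opA2_eq_sum_onQubit, lie_sum, lie_sum, Finset.smul_sum]
  refine Finset.sum_congr rfl fun j _ => ?_
  rw [sum_onQubit_lie, sum_onQubit_lie, lie_lie_I_pauliY_lie_I_pauliX_I_pauliY, map_smul,
    ← Complex.coe_smul]
  norm_num

end Generators

section StableExtension

variable {R : Type*} [Ring R] [Module ℝ R]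

def HasLengthTwoStableExtension (S : Set R) (B C : R) : Prop :=
  ∃ k₁ ∈ S, ∃ k₂ ∈ S, ∃ c : ℝ, c ≠ 0 ∧ ⁅k₂, ⁅k₁, ⁅B, C⁆⁆⁆ = c • ⁅B, C⁆

theorem HasLengthTwoStableExtension.symm {S : Set R} {B C : R}
    (h : HasLengthTwoStableExtension S B C) : HasLengthTwoStableExtension S C B := by
  obtain ⟨k₁, hk₁, k₂, hk₂, c, hc, hBC⟩ := h
  exact ⟨k₁, hk₁, k₂, hk₂, c, hc, by rw [← lie_skew C B, lie_neg, lie_neg, hBC, smul_neg]⟩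

end StableExtension

end

/-- For the generators `A₁ = Σ i·X_j`, `A₂ = Σ i·Y_j`, `A₃ = Σ_{(j,k)∈E} i·Z_jZ_k` of any
simple graph `G`, there are nonzero reals `c₁, c₂, c₃` with
`⁅A₁,⁅A₁,⁅A₁,A₃⁆⁆⁆ = c₁ • ⁅A₁,A₃⁆`, `⁅A₂,⁅A₂,⁅A₂,A₃⁆⁆⁆ = c₂ • ⁅A₂,A₃⁆`, and
`⁅A₂,⁅A₂,⁅A₁,A₂⁆⁆⁆ = c₃ • ⁅A₁,A₂⁆`; hence every noncommuting pair from
`𝓢_G = {A₁, A₂, A₃}` admits a stable extension of length `2`, i.e. `𝓢_G` is cyclic with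
common cycle length `2`. -/
theorem stmt18 (n : ℕ) (G : SimpleGraph (Fin n)) [DecidableRel G.Adj] :
    (∃ c₁ : ℝ, c₁ ≠ 0 ∧
      ⁅opA1 n, ⁅opA1 n, ⁅opA1 n, opA3 n G⁆⁆⁆ = c₁ • ⁅opA1 n, opA3 n G⁆) ∧
    (∃ c₂ : ℝ, c₂ ≠ 0 ∧
      ⁅opA2 n, ⁅opA2 n, ⁅opA2 n, opA3 n G⁆⁆⁆ = c₂ • ⁅opA2 n, opA3 n G⁆) ∧
    (∃ c₃ : ℝ, c₃ ≠ 0 ∧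
      ⁅opA2 n, ⁅opA2 n, ⁅opA1 n, opA2 n⁆⁆⁆ = c₃ • ⁅opA1 n, opA2 n⁆) ∧
    (∀ B ∈ ({opA1 n, opA2 n, opA3 n G} : Set (Matrix (Fin n → Fin 2) (Fin n → Fin 2) ℂ)),
      ∀ C ∈ ({opA1 n, opA2 n, opA3 n G} : Set (Matrix (Fin n → Fin 2) (Fin n → Fin 2) ℂ)),
        ⁅B, C⁆ ≠ 0 →
          ∃ k₁ ∈ ({opA1 n, opA2 n, opA3 n G} :
              Set (Matrix (Fin n → Fin 2) (Fin n → Fin 2) ℂ)),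
            ∃ k₂ ∈ ({opA1 n, opA2 n, opA3 n G} :
                Set (Matrix (Fin n → Fin 2) (Fin n → Fin 2) ℂ)),
              ∃ c : ℝ, c ≠ 0 ∧ ⁅k₂, ⁅k₁, ⁅B, C⁆⁆⁆ = c • ⁅B, C⁆) := by
  have h13 := opA1_lie_lie_lie_opA3 G
  have h23 := opA2_lie_lie_lie_opA3 G
  have h12 := opA2_lie_lie_lie_opA1_opA2 (n := n)
  refine ⟨⟨-16, by norm_num, h13⟩, ⟨-16, by norm_num, h23⟩, ⟨-4, by norm_num, h12⟩, ?_⟩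
  set S : Set (Matrix (Fin n → Fin 2) (Fin n → Fin 2) ℂ) := {opA1 n, opA2 n, opA3 n G}
  have e13 : HasLengthTwoStableExtension S (opA1 n) (opA3 n G) :=
    ⟨_, by simp [S], _, by simp [S], -16, by norm_num, h13⟩
  have e23 : HasLengthTwoStableExtension S (opA2 n) (opA3 n G) :=
    ⟨_, by simp [S], _, by simp [S], -16, by norm_num, h23⟩
  have e12 : HasLengthTwoStableExtension S (opA1 n) (opA2 n) :=
    ⟨_, by simp [S], _, by simp [S], -4, by norm_num, h12⟩
  intro B hB C hC hBC
  simp only [S, Set.mem_insert_iff, Set.mem_singleton_iff] at hB hC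
  rcases hB with rfl | rfl | rfl <;> rcases hC with rfl | rfl | rfl
  · exact absurd (Commute.refl _).lie_eq hBC
  · exact e12
  · exact e13
  · exact e12.symm
  · exact absurd (Commute.refl _).lie_eq hBC
  · exact e23
  · exact e13.symm
  · exact e23.symm
  · exact absurd (Commute.refl _).lie_eq hBC
end
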